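/- arXiv:1611.05413 — 9 statements merged into one kernel-verified Lean document; each statement's English description precedes it below -/
import Mathlib

section
/- For every channel realization z₁,…,z_K > 0, every transmit SNR ρ > 0 and every multicast target rate R_M > 0 with ε_M = 2^{R_M} − 1, the NOMA multicast outage event coincides with the OMA multicast outage event; that is, max{0, min_{1≤k≤K} (z_k − ε_M/ρ)/(z_k(1+ε_M))} = 0 (the NOMA power-allocation coefficient α_U² vanishes) if and only if min{1, R_M / log₂(1 + ρ · min_{1≤k≤K} z_k)} = 1 (the OMA time-allocation coefficient γ equals 1). Consequently, for any distribution of the channel gains, the multicasting outage probability of NOMA equals that of OMA. -/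
open Real MeasureTheory

/-- For positive channel gains, the NOMA multicast outage event
(the unicast power coefficient `α_U² = max{0, min_k (z_k − ε_M/ρ)/(z_k(1+ε_M))}` vanishes)
coincides with the OMA multicast outage event (the time-allocation coefficient
`γ = min{1, R_M / log₂(1 + ρ min_k z_k)}` equals 1); consequently, for any distribution
of (a.e. positive) channel gains, the multicast outage probabilities of NOMA and OMA agree. -/
theorem noma_oma_multicast_outage_equal
    (K : ℕ) (hK : 1 ≤ K) (ρ RM : ℝ) (hρ : 0 < ρ) (hRM : 0 < RM)
    (εM : ℝ) (hεM : εM = 2 ^ RM - 1)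
    (ne : (Finset.univ : Finset (Fin K)).Nonempty) :
    (∀ z : Fin K → ℝ, (∀ k, 0 < z k) →
      (max 0 (Finset.univ.inf' ne (fun k => (z k - εM / ρ) / (z k * (1 + εM)))) = 0 ↔
        min 1 (RM / Real.logb 2 (1 + ρ * Finset.univ.inf' ne z)) = 1)) ∧
    (∀ (μ : Measure (Fin K → ℝ)), (∀ᵐ z ∂μ, ∀ k, 0 < z k) →
      μ {z | max 0 (Finset.univ.inf' ne (fun k => (z k - εM / ρ) / (z k * (1 + εM)))) = 0}
        = μ {z | min 1 (RM / Real.logb 2 (1 + ρ * Finset.univ.inf' ne z)) = 1}) := by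
  have hεpos : 0 < εM := by
    have : (1:ℝ) < 2 ^ RM := by
      have := Real.one_lt_rpow_iff_of_pos (x := 2) (by norm_num) (y := RM)
      exact this.mpr (Or.inl ⟨by norm_num, hRM⟩)
    rw [hεM]; linarith
  have key : ∀ z : Fin K → ℝ, (∀ k, 0 < z k) →
      (max 0 (Finset.univ.inf' ne (fun k => (z k - εM / ρ) / (z k * (1 + εM)))) = 0 ↔
        min 1 (RM / Real.logb 2 (1 + ρ * Finset.univ.inf' ne z)) = 1) := by
    intro z hz
    have hm : Finset.univ.inf' ne z ∈ Set.range z := by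
      obtain ⟨k, _, hk⟩ := Finset.exists_mem_eq_inf' ne z
      exact ⟨k, hk.symm⟩
    obtain ⟨k0, hk0⟩ := hm
    have hmpos : 0 < Finset.univ.inf' ne z := hk0 ▸ hz k0
    have hL : 0 < Real.logb 2 (1 + ρ * Finset.univ.inf' ne z) := by
      apply Real.logb_pos (by norm_num)
      nlinarith
    constructor
    · intro h
      -- max 0 A = 0 means A ≤ 0
      have hA : Finset.univ.inf' ne (fun k => (z k - εM / ρ) / (z k * (1 + εM))) ≤ 0 :=
        le_of_max_le_right (le_of_eq h)
      obtain ⟨k, _, hk⟩ := (Finset.inf'_le_iff ne).mp hA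
      have hden : 0 < z k * (1 + εM) := mul_pos (hz k) (by linarith)
      have hnum : z k - εM / ρ ≤ 0 := by
        by_contra hc
        push_neg at hc
        have := div_pos hc hden
        linarith
      have hm2 : Finset.univ.inf' ne z ≤ εM / ρ :=
        le_trans (Finset.inf'_le z (Finset.mem_univ k)) (by linarith)
      -- so 1 + ρ m ≤ 2 ^ RM, hence logb ≤ RM, hence 1 ≤ RM / logb
      have h1 : 1 + ρ * Finset.univ.inf' ne z ≤ 2 ^ RM := by
        have : ρ * Finset.univ.inf' ne z ≤ εM := by
          have := (le_div_iff₀ hρ).mp hm2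
          linarith [mul_comm ρ (Finset.univ.inf' ne z)]
        linarith [hεM ▸ this]
      have hlog : Real.logb 2 (1 + ρ * Finset.univ.inf' ne z) ≤ RM := by
        rw [Real.logb_le_iff_le_rpow (by norm_num) (by nlinarith)]
        exact h1
      have : (1:ℝ) ≤ RM / Real.logb 2 (1 + ρ * Finset.univ.inf' ne z) :=
        (one_le_div hL).mpr hlog
      exact min_eq_left this
    · intro h
      have h1 : (1:ℝ) ≤ RM / Real.logb 2 (1 + ρ * Finset.univ.inf' ne z) := by
        by_contra hc
        push_neg at hc
        have := min_eq_right hc.le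
        rw [this] at h
        linarith
      have hlog : Real.logb 2 (1 + ρ * Finset.univ.inf' ne z) ≤ RM := (one_le_div hL).mp h1
      have h2 : 1 + ρ * Finset.univ.inf' ne z ≤ 2 ^ RM :=
        (Real.logb_le_iff_le_rpow (by norm_num) (by nlinarith)).mp hlog
      have hm2 : z k0 ≤ εM / ρ := by
        rw [le_div_iff₀ hρ]
        nlinarith [hk0 ▸ h2]
      have hnum : (z k0 - εM / ρ) / (z k0 * (1 + εM)) ≤ 0 := by
        exact div_nonpos_of_nonpos_of_nonneg (by linarith)
          (mul_pos (hz k0) (by linarith)).le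
      have hA : Finset.univ.inf' ne (fun k => (z k - εM / ρ) / (z k * (1 + εM))) ≤ 0 :=
        le_trans (Finset.inf'_le _ (Finset.mem_univ k0)) hnum
      exact max_eq_left hA
  refine ⟨key, fun μ hμ => ?_⟩
  apply measure_congr
  filter_upwards [hμ] with z hz
  have := key z hz
  exact eq_iff_iff.mpr this
end

section
/- Let M ≥ 1, K ≥ 2, ρ > 0, R_M > 0, R_U > 0, ε_M = 2^{R_M} − 1, ε_U = 2^{R_U} − 1. Let z ~ Gamma(M,1) and u ~ Exp(K−1) be independent, and let P_N = P( z · max{0, min{f(z), f(u)}} < ε_U/ρ ) be the NOMA unicasting outage probability. Set φ = ε_M/ρ + ε_U(1+ε_M)/ρ, ψ = ε_U(1+ε_M)/ρ, a = 1/(ψ + ε_M/ρ), b = ρ/ε_M, and F̃(x) = Γ(M, 1/x)/(M−1)! for x > 0 (with F̃(x) = 0 for x ≤ 0). Then P_N = Q₁ + Q₂ + Q₃, where Q₁ = 1 − (Γ(M, ε_M/ρ)/(M−1)!) · e^{−(K−1)ε_M/ρ}, Q₂ = (γ(M, Kφ) − γ(M, K ε_M/ρ)) / ((M−1)! K^M),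 and Q₃ = ∫_a^b [ F̃(x) − F̃( 1/ψ − (ε_M/(ρψ)) x ) ] · ((K−1)/x²) e^{−(K−1)/x} dx. -/
/-!
Write `t₀ = ε_M/ρ`. Outside the quadrant `{z > t₀, u > t₀}` one of `f z`, `f u` is `≤ 0`, so the
rate vanishes and the user is in outage; inside it, outage means `z < t₀ + ψ` when `z ≤ u` and
`z (u - t₀) < ψ u` when `u < z`. So `P_N = 1 - P(z > t₀) P(u > t₀) + P(A) + P(B)` for these two
regions `A`, `B`, and the first terms are `Q₁`. Integrating out `u` first,
`P(A) = E[e^{-(K-1) z}; t₀ < z < t₀ + ψ]`, which is `Q₂` after the scaling `s = K z`.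
Integrating out `z` first, `P(B) = E[Γ(M, u) - Γ(M, ψ u / (u - t₀)); t₀ < u < t₀ + ψ] / (M-1)!`,
which is `Q₃` after the substitution `x = 1/u`, since `F̃ x = P(z > 1/x)`.
-/

open Real MeasureTheory ProbabilityTheory Set Filter

section ProductSlices

variable {α β : Type*} [MeasurableSpace α] [MeasurableSpace β] {s : Set (α × β)}

lemma measureReal_prod_eq_integral (μ : Measure α) (ν : Measure β) [IsFiniteMeasure ν]
    (hs : MeasurableSet s) :
    (μ.prod ν).real s = ∫ x, ν.real (Prod.mk x ⁻¹' s) ∂μ := by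
  rw [measureReal_def, Measure.prod_apply hs, ← integral_toReal
    (measurable_measure_prodMk_left hs).aemeasurable (ae_of_all _ fun _ => measure_lt_top _ _)]
  rfl

lemma measureReal_prod_eq_integral_symm (μ : Measure α) (ν : Measure β) [IsFiniteMeasure μ]
    [SFinite ν] (hs : MeasurableSet s) :
    (μ.prod ν).real s = ∫ y, μ.real ((·, y) ⁻¹' s) ∂ν := by
  rw [measureReal_def, Measure.prod_apply_symm hs, ← integral_toReal
    (measurable_measure_prodMk_right hs).aemeasurable (ae_of_all _ fun _ => measure_lt_top _ _)]
  rfl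

end ProductSlices

lemma measureReal_compl_union_union {α : Type*} [MeasurableSpace α] {μ : Measure α}
    [IsProbabilityMeasure μ] {s t u : Set α} (hs : MeasurableSet s) (ht : MeasurableSet t)
    (hu : MeasurableSet u) (hts : t ⊆ s) (hus : u ⊆ s) (htu : Disjoint t u) :
    μ.real (sᶜ ∪ (t ∪ u)) = 1 - μ.real s + μ.real t + μ.real u := by
  rw [measureReal_union (disjoint_compl_left.mono_right (union_subset hts hus)) (ht.union hu),
    measureReal_compl hs, probReal_univ, measureReal_union htu hu]
  ring

lemma integral_Ioo_eq_integral_Ioo_inv {a b : ℝ} (ha : 0 < a) (hb : 0 < b) (g : ℝ → ℝ) :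
    ∫ u in Ioo a b, g u = ∫ x in Ioo b⁻¹ a⁻¹, g x⁻¹ / x ^ 2 := by
  have himage : (·⁻¹) '' Ioo b⁻¹ a⁻¹ = Ioo a b := by
    ext u
    constructor
    · rintro ⟨x, ⟨hbx, hxa⟩, rfl⟩
      have hx : 0 < x := (inv_pos.2 hb).trans hbx
      exact ⟨(lt_inv_comm₀ ha hx).2 hxa, (inv_lt_comm₀ hx hb).2 hbx⟩
    · rintro ⟨hau, hub⟩
      have hu : 0 < u := ha.trans hau
      exact ⟨u⁻¹, ⟨inv_strictAnti₀ hu hub, inv_strictAnti₀ ha hau⟩, inv_inv u⟩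
  rw [← himage, integral_image_eq_integral_abs_deriv_smul measurableSet_Ioo
    (fun x hx => (hasDerivAt_inv ((inv_pos.2 hb).trans hx.1).ne').hasDerivWithinAt)
    inv_injective.injOn]
  refine setIntegral_congr_fun measurableSet_Ioo fun x _ => ?_
  rw [abs_neg, abs_inv, abs_pow, sq_abs, smul_eq_mul, div_eq_inv_mul]

instance (a r : ℝ) : NullSingletonClass (gammaMeasure a r) :=
  inferInstanceAs (NullSingletonClass (volume.withDensity _))

instance (r : ℝ) : NullSingletonClass (expMeasure r) :=
  inferInstanceAs (NullSingletonClass (gammaMeasure 1 r))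

section GammaDistribution

variable {a r : ℝ}

lemma setIntegral_gammaMeasure (ha : 0 < a) (hr : 0 < r) {s : Set ℝ} (hs : MeasurableSet s)
    (g : ℝ → ℝ) :
    ∫ x in s, g x ∂gammaMeasure a r = ∫ x in s, gammaPDFReal a r x * g x := by
  unfold gammaMeasure gammaPDF
  have h := setIntegral_withDensity_eq_setIntegral_toReal_smul (μ := volume)
    (measurable_gammaPDFReal a r).ennreal_ofReal (ae_of_all _ fun _ => ENNReal.ofReal_lt_top) g hs
  simpa only [ENNReal.toReal_ofReal (gammaPDFReal_nonneg ha hr _), smul_eq_mul] using h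

lemma measureReal_gammaMeasure (ha : 0 < a) (hr : 0 < r) {s : Set ℝ} (hs : MeasurableSet s) :
    (gammaMeasure a r).real s = ∫ x in s, gammaPDFReal a r x := by
  simpa using setIntegral_gammaMeasure ha hr hs (fun _ => 1)

lemma ae_pos_gammaMeasure : ∀ᵐ x ∂gammaMeasure a r, 0 < x := by
  have h : gammaMeasure a r (Iic 0) = 0 := by
    rw [gammaMeasure, withDensity_apply _ measurableSet_Iic,
      setLIntegral_congr Iio_ae_eq_Iic.symm]
    exact lintegral_gammaPDF_of_nonpos le_rfl
  simpa using measure_eq_zero_iff_ae_notMem.mp h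

lemma gammaPDFReal_nat_add_one_one (n : ℕ) {x : ℝ} (hx : 0 ≤ x) :
    gammaPDFReal (n + 1) 1 x = x ^ n * exp (-x) / n.factorial := by
  rw [gammaPDFReal, if_pos hx, Real.Gamma_nat_eq_factorial, add_sub_cancel_right,
    Real.rpow_natCast, one_rpow, one_mul]
  ring

lemma gammaPDFReal_one {x : ℝ} (hx : 0 ≤ x) :
    gammaPDFReal 1 r x = r * exp (-(r * x)) := by
  simp [gammaPDFReal, hx]

lemma measureReal_expMeasure_Ioi (hr : 0 < r) {t : ℝ} (ht : 0 ≤ t) :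
    (expMeasure r).real (Ioi t) = exp (-(r * t)) := by
  have := isProbabilityMeasure_expMeasure hr
  rw [← compl_Iic, measureReal_compl measurableSet_Iic, ← cdf_eq_real, cdf_expMeasure_eq hr,
    if_pos ht, probReal_univ]
  ring

lemma measureReal_prod_expMeasure_fst_le (μ : Measure ℝ) (hr : 0 < r) {I : Set ℝ}
    (hI : MeasurableSet I) (hI0 : I ⊆ Ici 0) :
    (μ.prod (expMeasure r)).real {p | p.1 ∈ I ∧ p.1 ≤ p.2} = ∫ z in I, exp (-(r * z)) ∂μ := by
  have := isProbabilityMeasure_expMeasure hr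
  have hslice : ∀ z, (expMeasure r).real (Prod.mk z ⁻¹' {p | p.1 ∈ I ∧ p.1 ≤ p.2})
      = I.indicator (fun z => exp (-(r * z))) z := fun z => by
    by_cases hz : z ∈ I
    · have hpre : Prod.mk z ⁻¹' {p | p.1 ∈ I ∧ p.1 ≤ p.2} = Ici z := by ext; simp [hz]
      rw [hpre, indicator_of_mem hz, measureReal_congr Ioi_ae_eq_Ici.symm,
        measureReal_expMeasure_Ioi hr (hI0 hz)]
    · simp [hz]
  have hm : MeasurableSet {p : ℝ × ℝ | p.1 ∈ I ∧ p.1 ≤ p.2} :=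
    (measurable_fst hI).inter (measurableSet_le measurable_fst measurable_snd)
  rw [measureReal_prod_eq_integral _ _ hm, integral_congr_ae (ae_of_all _ hslice),
    integral_indicator hI]

end GammaDistribution

/- `upperIncGamma n t = Γ(n + 1, t)`: the index is the power of `s`, not the shape. -/
noncomputable def upperIncGamma (n : ℕ) (t : ℝ) : ℝ := ∫ s in Ioi t, s ^ n * exp (-s)

lemma integrableOn_pow_mul_exp_neg_Ioi (n : ℕ) (t : ℝ) :
    IntegrableOn (fun s : ℝ => s ^ n * exp (-s)) (Ioi t) := by
  have h0 : IntegrableOn (fun s : ℝ => s ^ n * exp (-s)) (Ioi 0) := by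
    simpa [Real.rpow_natCast, mul_comm] using
      Real.GammaIntegral_convergent (s := n + 1) (by positivity)
  refine IntegrableOn.mono_set ?_ (Ioi_subset_Ioi (min_le_left t 0))
  rw [← Ioc_union_Ioi_eq_Ioi (min_le_right t 0)]
  exact (Continuous.integrableOn_Ioc (by fun_prop)).union h0

lemma upperIncGamma_sub_upperIncGamma (n : ℕ) (u v : ℝ) :
    upperIncGamma n u - upperIncGamma n v = ∫ s in u..v, s ^ n * exp (-s) :=
  intervalIntegral.integral_Ioi_sub_Ioi' (integrableOn_pow_mul_exp_neg_Ioi n u)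
    (integrableOn_pow_mul_exp_neg_Ioi n v)

section Erlang

variable (n : ℕ)

lemma measureReal_erlang {s : Set ℝ} (hs : MeasurableSet s) (hs0 : s ⊆ Ici 0) :
    (gammaMeasure (n + 1) 1).real s = (∫ x in s, x ^ n * exp (-x)) / n.factorial := by
  rw [measureReal_gammaMeasure (by positivity) one_pos hs, ← integral_div]
  exact setIntegral_congr_fun hs fun x hx => gammaPDFReal_nat_add_one_one n (hs0 hx)

lemma measureReal_erlang_Ioi {t : ℝ} (ht : 0 ≤ t) :
    (gammaMeasure (n + 1) 1).real (Ioi t) = upperIncGamma n t / n.factorial :=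
  measureReal_erlang n measurableSet_Ioi fun _ hx => ht.trans (le_of_lt hx)

lemma measureReal_erlang_Ioo {u v : ℝ} (hu : 0 ≤ u) (huv : u ≤ v) :
    (gammaMeasure (n + 1) 1).real (Ioo u v)
      = (upperIncGamma n u - upperIncGamma n v) / n.factorial := by
  rw [measureReal_erlang n measurableSet_Ioo fun _ hx => hu.trans (le_of_lt hx.1),
    upperIncGamma_sub_upperIncGamma, intervalIntegral.integral_of_le huv,
    integral_Ioc_eq_integral_Ioo]

lemma setIntegral_exp_erlang {c t₀ t₁ : ℝ} (hc : 0 < c) (ht₀ : 0 ≤ t₀) (ht : t₀ ≤ t₁) :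
    ∫ z in Ioo t₀ t₁, exp (-((c - 1) * z)) ∂gammaMeasure (n + 1) 1
      = (∫ s in c * t₀..c * t₁, s ^ n * exp (-s)) / (n.factorial * c ^ (n + 1)) := by
  have hpt : ∀ z ∈ Ioo t₀ t₁, gammaPDFReal (n + 1) 1 z * exp (-((c - 1) * z))
      = (c * z) ^ n * exp (-(c * z)) / (n.factorial * c ^ n) := fun z hz => by
    rw [gammaPDFReal_nat_add_one_one n (ht₀.trans (le_of_lt hz.1)), mul_pow, div_mul_eq_mul_div,
      mul_assoc, ← exp_add]
    field_simp
    ring_nf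
  rw [setIntegral_gammaMeasure (by positivity) one_pos measurableSet_Ioo,
    setIntegral_congr_fun measurableSet_Ioo hpt, integral_div, ← integral_Ioc_eq_integral_Ioo,
    ← intervalIntegral.integral_of_le ht, intervalIntegral.integral_comp_mul_left
      (fun s => s ^ n * exp (-s)) hc.ne', smul_eq_mul, pow_succ]
  field_simp

end Erlang

namespace NOMA

/- The two outage regions inside `{z > t₀, u > t₀}`: there the minimum of `f z` and `f u` is
`f z` when `z ≤ u` and `f u` when `u < z`. -/
def outageLe (t₀ ψ : ℝ) : Set (ℝ × ℝ) := {p | p.1 ∈ Ioo t₀ (t₀ + ψ) ∧ p.1 ≤ p.2}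

def outageGt (t₀ ψ : ℝ) : Set (ℝ × ℝ) :=
  {p | t₀ < p.2 ∧ p.2 < p.1 ∧ p.1 * (p.2 - t₀) < ψ * p.2}

lemma measurableSet_outageLe (t₀ ψ : ℝ) : MeasurableSet (outageLe t₀ ψ) :=
  (measurable_fst measurableSet_Ioo).inter (measurableSet_le measurable_fst measurable_snd)

lemma measurableSet_outageGt (t₀ ψ : ℝ) : MeasurableSet (outageGt t₀ ψ) := by
  unfold outageGt; measurability

lemma mul_min_div_sub_lt_iff {t₀ c ψ z u : ℝ} (hc : 0 < c) (hz : 0 < z) (hu : 0 < u) :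
    z * min ((z - t₀) / (z * c)) ((u - t₀) / (u * c)) < ψ / c ↔
      z < t₀ + ψ ∨ z * (u - t₀) < ψ * u := by
  rw [mul_min_of_nonneg _ _ hz.le, min_lt_iff,
    show z * ((z - t₀) / (z * c)) = (z - t₀) / c by field_simp,
    show z * ((u - t₀) / (u * c)) = z * (u - t₀) / u / c by field_simp,
    div_lt_div_iff_of_pos_right hc, div_lt_div_iff_of_pos_right hc, div_lt_iff₀ hu,
    sub_lt_iff_lt_add']

lemma outage_iff {t₀ c ψ z u : ℝ} (ht₀ : 0 < t₀) (hc : 0 < c) (hψ : 0 < ψ) (hz : 0 < z)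
    (hu : 0 < u) :
    z * max 0 (min ((z - t₀) / (z * c)) ((u - t₀) / (u * c))) < ψ / c ↔
      (z, u) ∈ (Ioi t₀ ×ˢ Ioi t₀)ᶜ ∪ (outageLe t₀ ψ ∪ outageGt t₀ ψ) := by
  by_cases hzu : t₀ < z ∧ t₀ < u
  · obtain ⟨hz', hu'⟩ := hzu
    have hfz : 0 < (z - t₀) / (z * c) := div_pos (sub_pos.2 hz') (by positivity)
    have hfu : 0 < (u - t₀) / (u * c) := div_pos (sub_pos.2 hu') (by positivity)
    rw [max_eq_right (le_min hfz.le hfu.le), mul_min_div_sub_lt_iff hc hz hu]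
    simp only [outageLe, outageGt, mem_union, mem_compl_iff, mem_prod, mem_Ioi, mem_Ioo,
      mem_ofPred_eq, hz', hu', not_true_eq_false, and_self, false_or, true_and]
    constructor
    · rintro (h | h) <;> rcases le_or_gt z u with h' | h'
      · exact Or.inl ⟨h, h'⟩
      · exact Or.inr ⟨h', by nlinarith⟩
      · exact Or.inl ⟨by nlinarith, h'⟩
      · exact Or.inr ⟨h', h⟩
    · rintro (h | h)
      · exact Or.inl h.1
      · exact Or.inr h.2
  · have hmin : min ((z - t₀) / (z * c)) ((u - t₀) / (u * c)) ≤ 0 := by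
      rcases not_and_or.1 hzu with h | h
      · exact (min_le_left _ _).trans
          (div_nonpos_of_nonpos_of_nonneg (by linarith) (by positivity))
      · exact (min_le_right _ _).trans
          (div_nonpos_of_nonpos_of_nonneg (by linarith) (by positivity))
    rw [max_eq_left hmin, mul_zero]
    simp only [mem_union, mem_compl_iff, mem_prod, mem_Ioi, hzu, not_false_eq_true, true_or,
      iff_true]
    positivity

lemma measureReal_erlang_prod_outageGt (n : ℕ) (ν : Measure ℝ) [SFinite ν] {t₀ ψ : ℝ}
    (ht₀ : 0 < t₀) :
    ((gammaMeasure (n + 1) 1).prod ν).real (outageGt t₀ ψ)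
      = ∫ u in Ioo t₀ (t₀ + ψ),
          ((upperIncGamma n u - upperIncGamma n (ψ * u / (u - t₀))) / n.factorial) ∂ν := by
  have := isProbabilityMeasure_gammaMeasure (a := n + 1) (by positivity) one_pos
  have hslice : ∀ u, (gammaMeasure (n + 1) 1).real ((·, u) ⁻¹' outageGt t₀ ψ)
      = (Ioo t₀ (t₀ + ψ)).indicator
          (fun u => (upperIncGamma n u - upperIncGamma n (ψ * u / (u - t₀))) / n.factorial) u := by
    intro u
    by_cases hu : t₀ < u
    · have hut : 0 < u - t₀ := sub_pos.2 hu
      have hpre : (·, u) ⁻¹' outageGt t₀ ψ = Ioo u (ψ * u / (u - t₀)) := by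
        ext z; simp [outageGt, hu, lt_div_iff₀ hut]
      rw [hpre]
      by_cases hu' : u < t₀ + ψ
      · have hle : u ≤ ψ * u / (u - t₀) := by rw [le_div_iff₀ hut]; nlinarith
        rw [measureReal_erlang_Ioo n (ht₀.trans hu).le hle, indicator_of_mem (mem_Ioo.2 ⟨hu, hu'⟩)]
      · have hle : ψ * u / (u - t₀) ≤ u := by rw [div_le_iff₀ hut]; nlinarith
        rw [Ioo_eq_empty (not_lt.2 hle), indicator_of_notMem fun h => hu' h.2]
        simp
    · have hpre : (·, u) ⁻¹' outageGt t₀ ψ = ∅ := by ext z; simp [outageGt, hu]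
      rw [hpre, indicator_of_notMem fun h => hu h.1]
      simp
  rw [measureReal_prod_eq_integral_symm _ _ (measurableSet_outageGt t₀ ψ),
    integral_congr_ae (ae_of_all _ hslice), integral_indicator measurableSet_Ioo]

lemma setIntegral_expMeasure_eq_intervalIntegral_inv {r t₀ ψ : ℝ} (hr : 0 < r) (ht₀ : 0 < t₀)
    (hψ : 0 < ψ) (G F : ℝ → ℝ) (hGF : ∀ u, t₀ < u → G u = F u⁻¹ - F (ψ * u / (u - t₀))⁻¹) :
    ∫ u in Ioo t₀ (t₀ + ψ), G u ∂expMeasure r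
      = ∫ x in 1 / (ψ + t₀)..1 / t₀,
          (F x - F (1 / ψ - t₀ / ψ * x)) * (r / x ^ 2) * exp (-r / x) := by
  have hlt : 1 / (ψ + t₀) ≤ 1 / t₀ := one_div_le_one_div_of_le ht₀ (by linarith)
  rw [expMeasure, setIntegral_gammaMeasure one_pos hr measurableSet_Ioo,
    integral_Ioo_eq_integral_Ioo_inv ht₀ (by positivity), intervalIntegral.integral_of_le hlt,
    integral_Ioc_eq_integral_Ioo, add_comm, one_div, one_div]
  refine setIntegral_congr_fun measurableSet_Ioo fun x hx => ?_
  have hx0 : 0 < x := (inv_pos.2 (by positivity)).trans hx.1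
  have ht₀x : t₀ < x⁻¹ := (lt_inv_comm₀ hx0 ht₀).1 hx.2
  have hinv : (ψ * x⁻¹ / (x⁻¹ - t₀))⁻¹ = 1 / ψ - t₀ / ψ * x := by
    have : x⁻¹ - t₀ ≠ 0 := (sub_pos.2 ht₀x).ne'
    field_simp
  rw [gammaPDFReal_one (inv_pos.2 hx0).le, hGF _ ht₀x, hinv, inv_inv]
  field_simp

/- In the paper's notation `t₀ = ε_M/ρ`, `c = 1 + ε_M`, `k = K` and `F = F̃`. -/
theorem measureReal_erlang_prod_exp_outage (n : ℕ) {k t₀ c ψ : ℝ} (hk : 1 < k) (ht₀ : 0 < t₀)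
    (hc : 0 < c) (hψ : 0 < ψ) (F : ℝ → ℝ)
    (hF : ∀ x, 0 < x → F x = upperIncGamma n (1 / x) / n.factorial) :
    ((gammaMeasure (n + 1) 1).prod (expMeasure (k - 1))).real
        {p | p.1 * max 0 (min ((p.1 - t₀) / (p.1 * c)) ((p.2 - t₀) / (p.2 * c))) < ψ / c}
      = 1 - upperIncGamma n t₀ / n.factorial * exp (-((k - 1) * t₀))
        + (∫ s in k * t₀..k * (t₀ + ψ), s ^ n * exp (-s)) / (n.factorial * k ^ (n + 1))
        + ∫ x in 1 / (ψ + t₀)..1 / t₀,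
            (F x - F (1 / ψ - t₀ / ψ * x)) * ((k - 1) / x ^ 2) * exp (-(k - 1) / x) := by
  have hr : 0 < k - 1 := sub_pos.2 hk
  have := isProbabilityMeasure_gammaMeasure (a := n + 1) (by positivity) one_pos
  have := isProbabilityMeasure_expMeasure hr
  have hpos : ∀ᵐ p ∂(gammaMeasure (n + 1) 1).prod (expMeasure (k - 1)), 0 < p.1 ∧ 0 < p.2 :=
    (Measure.quasiMeasurePreserving_fst.ae ae_pos_gammaMeasure).and
      (Measure.quasiMeasurePreserving_snd.ae ae_pos_gammaMeasure)
  have hae : {p : ℝ × ℝ | p.1 * max 0 (min ((p.1 - t₀) / (p.1 * c)) ((p.2 - t₀) / (p.2 * c)))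
      < ψ / c} =ᵐ[(gammaMeasure (n + 1) 1).prod (expMeasure (k - 1))]
      ((Ioi t₀ ×ˢ Ioi t₀)ᶜ ∪ (outageLe t₀ ψ ∪ outageGt t₀ ψ) : Set (ℝ × ℝ)) :=
    hpos.mono fun p hp => propext (outage_iff ht₀ hc hψ hp.1 hp.2)
  have hQ : MeasurableSet (Ioi t₀ ×ˢ Ioi t₀) := measurableSet_Ioi.prod measurableSet_Ioi
  rw [measureReal_congr hae,
    measureReal_compl_union_union hQ (measurableSet_outageLe t₀ ψ) (measurableSet_outageGt t₀ ψ)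
      (fun p hp => ⟨hp.1.1, hp.1.1.trans_le hp.2⟩) (fun p hp => ⟨hp.1.trans hp.2.1, hp.1⟩)
      (disjoint_left.2 fun p hp hp' => hp.2.not_gt hp'.2.1)]
  have hQval : ((gammaMeasure (n + 1) 1).prod (expMeasure (k - 1))).real (Ioi t₀ ×ˢ Ioi t₀)
      = upperIncGamma n t₀ / n.factorial * exp (-((k - 1) * t₀)) := by
    rw [measureReal_def, Measure.prod_prod, ENNReal.toReal_mul, ← measureReal_def,
      ← measureReal_def, measureReal_erlang_Ioi n ht₀.le, measureReal_expMeasure_Ioi hr ht₀.le]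
  have hF' : ∀ x, 0 < x → F x⁻¹ = upperIncGamma n x / n.factorial := fun x hx => by
    rw [hF _ (inv_pos.2 hx), one_div, inv_inv]
  rw [hQval, outageLe, measureReal_prod_expMeasure_fst_le _ hr measurableSet_Ioo
      fun x hx => (ht₀.trans hx.1).le, setIntegral_exp_erlang n (by linarith) ht₀.le (by linarith),
    measureReal_erlang_prod_outageGt n _ ht₀, setIntegral_expMeasure_eq_intervalIntegral_inv hr
      ht₀ hψ _ F fun u hu => by
        rw [hF' u (ht₀.trans hu), hF' _ (div_pos (by nlinarith) (sub_pos.2 hu)), sub_div]]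

end NOMA

open NOMA

/-- closed-form decomposition `P_N = Q₁ + Q₂ + Q₃` of the NOMA unicasting
outage probability, where `z ~ Gamma(M,1)` and `u ~ Exp(K−1)` are independent. -/
theorem noma_unicast_outage_probability
    (M K : ℕ) (hM : 1 ≤ M) (hK : 2 ≤ K)
    (ρ RM RU : ℝ) (hρ : 0 < ρ) (hRM : 0 < RM) (hRU : 0 < RU)
    (εM εU φ ψ a b : ℝ)
    (hεM : εM = 2 ^ RM - 1) (hεU : εU = 2 ^ RU - 1)
    (hφ : φ = εM / ρ + εU * (1 + εM) / ρ) (hψ : ψ = εU * (1 + εM) / ρ)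
    (ha : a = 1 / (ψ + εM / ρ)) (hb : b = ρ / εM)
    (f Γup γlow Ftil : ℝ → ℝ)
    (hf : ∀ y, f y = (y - εM / ρ) / (y * (1 + εM)))
    (hΓ : ∀ t, Γup t = ∫ s in Set.Ioi t, s ^ (M - 1) * Real.exp (-s))
    (hγ : ∀ t, γlow t = ∫ s in (0:ℝ)..t, s ^ (M - 1) * Real.exp (-s))
    (hFtil : ∀ x, Ftil x = if 0 < x then Γup (1 / x) / (M - 1).factorial else 0)
    (μ : Measure (ℝ × ℝ))
    (hμ : μ = (gammaMeasure M 1).prod (expMeasure ((K : ℝ) - 1)))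
    (PN : ℝ)
    (hPN : PN = (μ {p : ℝ × ℝ | p.1 * max 0 (min (f p.1) (f p.2)) < εU / ρ}).toReal) :
    PN =
      (1 - Γup (εM / ρ) / (M - 1).factorial * Real.exp (-((K : ℝ) - 1) * εM / ρ))
      + (γlow (K * φ) - γlow (K * εM / ρ)) / ((M - 1).factorial * (K : ℝ) ^ M)
      + ∫ x in a..b,
          (Ftil x - Ftil (1 / ψ - (εM / (ρ * ψ)) * x)) *
            (((K : ℝ) - 1) / x ^ 2) * Real.exp (-((K : ℝ) - 1) / x) := by
  obtain ⟨n, rfl⟩ : ∃ n, M = n + 1 := ⟨M - 1, by omega⟩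
  rw [Nat.add_sub_cancel] at hΓ hγ hFtil ⊢
  have hεM0 : 0 < εM := by rw [hεM]; linarith [one_lt_rpow one_lt_two hRM]
  have hεU0 : 0 < εU := by rw [hεU]; linarith [one_lt_rpow one_lt_two hRU]
  have hψ0 : 0 < ψ := by rw [hψ]; positivity
  have hΓ' : Γup = upperIncGamma n := funext hΓ
  have hthreshold : εU / ρ = ψ / (1 + εM) := by rw [hψ]; field_simp
  have hγsub : γlow (K * φ) - γlow (K * εM / ρ)
      = ∫ s in K * (εM / ρ)..K * (εM / ρ + ψ), s ^ n * exp (-s) := by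
    rw [hγ, hγ, intervalIntegral.integral_interval_sub_left, hφ, hψ, mul_div_assoc] <;>
      exact (by fun_prop : Continuous fun s : ℝ => s ^ n * exp (-s)).intervalIntegrable _ _
  simp only [hf, hthreshold] at hPN
  rw [hPN, ← measureReal_def, hμ, Nat.cast_succ, measureReal_erlang_prod_exp_outage n
    (by exact_mod_cast hK) (by positivity) (by positivity) hψ0 Ftil
    (fun x hx => by rw [hFtil, if_pos hx, hΓ']), hγsub, hΓ', ha, hb]
  rw [one_div_div, div_div, mul_div_assoc, neg_mul]
end

section
/- Let M ≥ 1, K ≥ 2, R_M > 0, R_U > 0, ε_M = 2^{R_M} − 1, ε_U = 2^{R_U} − 1. For ρ > 0 let z ~ Gamma(M,1) and u ~ Exp(K−1) be independent and let P_N(ρ) = P( z · max{0, min{f_ρ(z), f_ρ(u)}} < ε_U/ρ ), where f_ρ(y) = (y − ε_M/ρ)/(y(1+ε_M)). Then the diversity gain of NOMA unicasting equals 1: there exist constants c₁ > 0, c₂ > 0 and ρ₀ > 0 such that c₁/ρ ≤ P_N(ρ) ≤ c₂/ρ for all ρ ≥ ρ₀. -/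
/-!
Outage is certain once `u ≤ ε_M/ρ`, because then `f_ρ(u) ≤ 0`; under `Exp(K-1)` this event has
probability at least `(K-1)ε_M/(2ρ)`. Conversely, if `z > (ε_M + 2(1+ε_M)ε_U)/ρ` and
`u > 2ε_M/ρ`, then both `z f_ρ(z)` and `z f_ρ(u)` are at least `ε_U/ρ`, so outage lies in the union
of two events of probability `O(1/ρ)`: the `Gamma(M,1)` density is at most `1` (as
`x^m/m! ≤ eˣ`) and the `Exp(r)` CDF is at most `r t`.
-/

open Real MeasureTheory ProbabilityTheory Set

lemma half_le_one_sub_exp_neg {x : ℝ} (hx₀ : 0 ≤ x) (hx₁ : x ≤ 1) : x / 2 ≤ 1 - exp (-x) := by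
  have h : exp (-x) ≤ (1 + x)⁻¹ := by
    rw [exp_neg]
    exact inv_anti₀ (by positivity) (by linarith [add_one_le_exp x])
  have h' : (1 + x)⁻¹ ≤ 1 - x / 2 := by
    rw [inv_le_iff_one_le_mul₀ (by positivity)]
    nlinarith
  linarith

lemma expMeasure_Iic_le {r t : ℝ} (hr : 0 < r) (ht : 0 ≤ t) :
    expMeasure r (Iic t) ≤ ENNReal.ofReal (r * t) := by
  have := isProbabilityMeasure_expMeasure hr
  rw [← ofReal_cdf, cdf_expMeasure_eq hr, if_pos ht]
  exact ENNReal.ofReal_le_ofReal (by linarith [add_one_le_exp (-(r * t))])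

lemma expMeasure_Ioc_zero {r t : ℝ} (hr : 0 < r) (ht : 0 ≤ t) :
    expMeasure r (Ioc 0 t) = ENNReal.ofReal (1 - exp (-(r * t))) := by
  have := isProbabilityMeasure_expMeasure hr
  rw [← measure_cdf (expMeasure r), StieltjesFunction.measure_Ioc, cdf_expMeasure_eq hr,
    cdf_expMeasure_eq hr, if_pos ht, if_pos le_rfl]
  simp

lemma half_mul_le_expMeasure_Ioc_zero {r t : ℝ} (hr : 0 < r) (ht₀ : 0 ≤ t) (ht₁ : r * t ≤ 1) :
    ENNReal.ofReal (r * t / 2) ≤ expMeasure r (Ioc 0 t) := by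
  rw [expMeasure_Ioc_zero hr ht₀]
  exact ENNReal.ofReal_le_ofReal (half_le_one_sub_exp_neg (by positivity) ht₁)

lemma gammaMeasure_natCast_Iic_le {n : ℕ} (hn : 1 ≤ n) (t : ℝ) :
    gammaMeasure n 1 (Iic t) ≤ ENNReal.ofReal t := by
  obtain ⟨m, rfl⟩ := Nat.exists_eq_add_of_le' hn
  have hpdf : ∀ x ∈ Icc 0 t, gammaPDF (↑(m + 1)) 1 x ≤ 1 := by
    rintro x ⟨hx, -⟩
    rw [gammaPDF_of_nonneg hx, ENNReal.ofReal_le_one]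
    push_cast
    rw [Gamma_nat_eq_factorial, add_sub_cancel_right, rpow_natCast, one_rpow, one_mul,
      one_div, ← div_eq_inv_mul, ← le_div_iff₀ (exp_pos _), exp_neg, div_inv_eq_mul, one_mul]
    exact pow_div_factorial_le_exp x hx m
  rw [gammaMeasure, withDensity_apply _ measurableSet_Iic]
  calc ∫⁻ x in Iic t, gammaPDF (↑(m + 1)) 1 x ≤ volume (Icc 0 t) :=
        setLIntegral_le_meas measurableSet_Iic (fun x _ hx => hpdf x hx)
          (fun x hxt hx => gammaPDF_of_neg (by by_contra! h; exact hx ⟨h, hxt⟩))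
    _ = ENNReal.ofReal t := by rw [Real.volume_Icc, sub_zero]

section Outage

variable {g : ℝ → ℝ} {ε e d : ℝ}

lemma le_mul_max_zero_min (hg : ∀ y, g y = (y - e) / (y * (1 + ε))) (hε : 0 < 1 + ε)
    (he : 0 < e) (hd : 0 ≤ d) {z u : ℝ} (hz : e + 2 * (1 + ε) * d < z) (hu : 2 * e < u) :
    d ≤ z * max 0 (min (g z) (g u)) := by
  have hεd : 0 ≤ (1 + ε) * d := mul_nonneg hε.le hd
  have hz₀ : 0 < z := by linarith
  have hu₀ : 0 < u := by linarith
  have hgz : d ≤ z * g z := by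
    rw [hg, mul_div_assoc', le_div_iff₀ (by positivity)]
    nlinarith
  have hgu : d ≤ z * g u := by
    rw [hg, mul_div_assoc', le_div_iff₀ (by positivity)]
    nlinarith [mul_le_mul_of_nonneg_left hz.le hu₀.le]
  calc d ≤ min (z * g z) (z * g u) := le_min hgz hgu
    _ = z * min (g z) (g u) := (mul_min_of_nonneg _ _ hz₀.le).symm
    _ ≤ z * max 0 (min (g z) (g u)) := mul_le_mul_of_nonneg_left (le_max_right _ _) hz₀.le

lemma outage_subset (hg : ∀ y, g y = (y - e) / (y * (1 + ε))) (hε : 0 < 1 + ε)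
    (he : 0 < e) (hd : 0 ≤ d) :
    {p : ℝ × ℝ | p.1 * max 0 (min (g p.1) (g p.2)) < d} ⊆
      Iic (e + 2 * (1 + ε) * d) ×ˢ univ ∪ univ ×ˢ Iic (2 * e) := by
  rintro ⟨z, u⟩ hp
  by_contra! h
  simp only [mem_union, mem_prod, mem_Iic, mem_univ, and_true, true_and, not_or, not_le] at h
  exact (le_mul_max_zero_min hg hε he hd h.1 h.2).not_gt hp

lemma univ_prod_Ioc_subset_outage (hg : ∀ y, g y = (y - e) / (y * (1 + ε))) (hε : 0 ≤ 1 + ε)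
    (hd : 0 < d) :
    univ ×ˢ Ioc 0 e ⊆ {p : ℝ × ℝ | p.1 * max 0 (min (g p.1) (g p.2)) < d} := by
  rintro ⟨z, u⟩ ⟨-, hu₀, hue⟩
  have hgu : g u ≤ 0 := by
    rw [hg]
    exact div_nonpos_of_nonpos_of_nonneg (by linarith) (mul_nonneg hu₀.le hε)
  simpa [max_eq_left ((min_le_right _ _).trans hgu)] using hd

end Outage

/-- the diversity gain of NOMA unicasting is 1: the outage probability
`P_N(ρ)` decays exactly like `1/ρ` at high SNR. -/
theorem noma_unicast_diversity_gain_one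
    (M K : ℕ) (hM : 1 ≤ M) (hK : 2 ≤ K)
    (RM RU : ℝ) (hRM : 0 < RM) (hRU : 0 < RU)
    (εM εU : ℝ) (hεM : εM = 2 ^ RM - 1) (hεU : εU = 2 ^ RU - 1)
    (f : ℝ → ℝ → ℝ) (hf : ∀ ρ y, f ρ y = (y - εM / ρ) / (y * (1 + εM)))
    (μ : Measure (ℝ × ℝ))
    (hμ : μ = (gammaMeasure M 1).prod (expMeasure ((K : ℝ) - 1)))
    (PN : ℝ → ℝ)
    (hPN : ∀ ρ, PN ρ =
      (μ {p : ℝ × ℝ | p.1 * max 0 (min (f ρ p.1) (f ρ p.2)) < εU / ρ}).toReal) :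
    ∃ c₁ c₂ ρ₀ : ℝ, 0 < c₁ ∧ 0 < c₂ ∧ 0 < ρ₀ ∧
      ∀ ρ : ℝ, ρ₀ ≤ ρ → c₁ / ρ ≤ PN ρ ∧ PN ρ ≤ c₂ / ρ := by
  have hεM₀ : 0 < εM := by linarith [one_lt_rpow one_lt_two hRM]
  have hεU₀ : 0 < εU := by linarith [one_lt_rpow one_lt_two hRU]
  set r : ℝ := (K : ℝ) - 1
  have hr : 0 < r := by
    have : (2 : ℝ) ≤ K := by exact_mod_cast hK
    linarith
  have : IsProbabilityMeasure (gammaMeasure M 1) :=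
    isProbabilityMeasure_gammaMeasure (by exact_mod_cast hM) one_pos
  have : IsProbabilityMeasure (expMeasure r) := isProbabilityMeasure_expMeasure hr
  refine ⟨r * εM / 2, εM + 2 * (1 + εM) * εU + 2 * r * εM, r * εM, by positivity,
    by positivity, by positivity, fun ρ hρ => ?_⟩
  have hρ₀ : 0 < ρ := lt_of_lt_of_le (by positivity) hρ
  rw [hPN, hμ]
  constructor
  · rw [← ENNReal.ofReal_le_iff_le_toReal (measure_ne_top _ _)]
    calc ENNReal.ofReal (r * εM / 2 / ρ) = ENNReal.ofReal (r * (εM / ρ) / 2) := by ring_nf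
      _ ≤ expMeasure r (Ioc 0 (εM / ρ)) := half_mul_le_expMeasure_Ioc_zero hr (by positivity)
          (by rwa [← mul_div_assoc, div_le_one hρ₀])
      _ = _ := by rw [Measure.prod_prod, measure_univ, one_mul]
      _ ≤ _ := measure_mono (univ_prod_Ioc_subset_outage (hf ρ) (by linarith) (by positivity))
  · refine ENNReal.toReal_le_of_le_ofReal (by positivity) ?_
    calc _ ≤ _ := measure_mono (outage_subset (hf ρ) (by linarith) (by positivity) (by positivity))
      _ ≤ _ := measure_union_le _ _
      _ = gammaMeasure M 1 (Iic (εM / ρ + 2 * (1 + εM) * (εU / ρ))) +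
            expMeasure r (Iic (2 * (εM / ρ))) := by
          rw [Measure.prod_prod, Measure.prod_prod, measure_univ, measure_univ, mul_one, one_mul]
      _ ≤ ENNReal.ofReal (εM / ρ + 2 * (1 + εM) * (εU / ρ)) +
            ENNReal.ofReal (r * (2 * (εM / ρ))) :=
          add_le_add (gammaMeasure_natCast_Iic_le hM _) (expMeasure_Iic_le hr (by positivity))
      _ = _ := by
          rw [← ENNReal.ofReal_add (by positivity) (by positivity)]
          ring_nf
end

section
/- Fix R_M > 0 and set ε_M = 2^{R_M} − 1. Fix u > 0 and real numbers x₁, x₂ with u ≤ x₁ ≤ x₂. For ρ > ε_M/u define F_u^{(ρ)}(x) = log₂(1 + ρ x (u − ε_M/ρ)/(u(1+ε_M))) − (1 − R_M/log₂(1+ρu)) · log₂(1+ρx). Then there exists ρ₀ > ε_M/u such that for all ρ ≥ ρ₀, F_u^{(ρ)}(x₁) ≤ F_u^{(ρ)}(x₂); that is, in the high SNR regime the function x ↦ F_u^{(ρ)}(x) is monotonically increasing on [u, ∞). -/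
/-!
Write `a = (ρu - ε_M)/(u(1 + ε_M))`, so that the first logarithm is `log₂(1 + a x)`, and
`c = 1 - R_M / log₂(1 + ρu)`. The derivative of `log(1 + a x) - c log(1 + ρ x)` is nonnegative on
`[u, ∞)` as soon as `c ≤ 1` and `c ρ ≤ a + (1 - c) a ρ u`, and both hold once
`log₂(1 + ρu) ≤ R_M a u = R_M (ρu - ε_M)/(1 + ε_M)`. Since `log₂(1 + ρu) = o(ρ)`, this last
inequality holds for all large `ρ`.
-/

open Real Filter Set

theorem monotoneOn_log_one_add_mul_sub_mul_log_one_add_mul {a b c u : ℝ} (ha : 0 ≤ a)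
    (hb : 0 ≤ b) (hu : 0 ≤ u) (hc : c ≤ 1) (h : c * b ≤ a + (1 - c) * a * b * u) :
    MonotoneOn (fun x ↦ log (1 + a * x) - c * log (1 + b * x)) (Ici u) := by
  have hpos (k x : ℝ) (hk : 0 ≤ k) (hx : x ∈ Ici u) : 0 < 1 + k * x := by
    have : 0 ≤ k * x := mul_nonneg hk (hu.trans hx)
    linarith
  have hderiv : ∀ x ∈ Ici u, HasDerivAt (fun x ↦ log (1 + a * x) - c * log (1 + b * x))
      (a / (1 + a * x) - c * (b / (1 + b * x))) x := fun x hx ↦ by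
    have hlin (k : ℝ) : HasDerivAt (fun x ↦ 1 + k * x) k x := by
      simpa using ((hasDerivAt_id x).const_mul k).const_add 1
    exact ((hlin a).log (hpos a x ha hx).ne').sub
      (((hlin b).log (hpos b x hb hx).ne').const_mul c)
  refine monotoneOn_of_hasDerivWithinAt_nonneg (convex_Ici u)
    (fun x hx ↦ (hderiv x hx).continuousAt.continuousWithinAt)
    (fun x hx ↦ (hderiv x (interior_subset hx)).hasDerivWithinAt) fun x hx ↦ ?_
  replace hx : u ≤ x := interior_subset hx
  rw [sub_nonneg, mul_div_assoc', div_le_div_iff₀ (hpos b x hb hx) (hpos a x ha hx)]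
  nlinarith [mul_nonneg (mul_nonneg (sub_nonneg.2 hc) (mul_nonneg ha hb)) (sub_nonneg.2 hx)]

theorem eventually_logb_le_mul_sub (b : ℝ) {k : ℝ} (hk : 0 < k) (C : ℝ) :
    ∀ᶠ t in atTop, logb b t ≤ k * (t - C) := by
  filter_upwards [(isLittleO_logb_id_atTop (b := b)).bound (half_pos hk),
    eventually_ge_atTop (max 0 (2 * C))] with t hlog ht
  rw [norm_eq_abs, norm_eq_abs, id, abs_of_nonneg ((le_max_left _ _).trans ht)] at hlog
  nlinarith [le_abs_self (logb b t), (le_max_right _ _).trans ht]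

theorem rate_difference_monotoneOn {RM εM u ρ : ℝ} (hRM : 0 < RM) (hεM : 0 < εM) (hu : 0 < u)
    (hρ : εM / u < ρ) (hsnr : logb 2 (1 + ρ * u) ≤ RM / (1 + εM) * (ρ * u - εM)) :
    MonotoneOn (fun x ↦ logb 2 (1 + ρ * x * (u - εM / ρ) / (u * (1 + εM))) -
      (1 - RM / logb 2 (1 + ρ * u)) * logb 2 (1 + ρ * x)) (Ici u) := by
  have hρ0 : 0 < ρ := (div_pos hεM hu).trans hρ
  have hρu : εM < ρ * u := (div_lt_iff₀ hu).1 hρ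
  set a := (ρ * u - εM) / (u * (1 + εM)) with ha
  have ha0 : 0 ≤ a := div_nonneg (by linarith) (by positivity)
  have hau : a * u = (ρ * u - εM) / (1 + εM) := by rw [ha]; field_simp
  have harg (x : ℝ) : ρ * x * (u - εM / ρ) / (u * (1 + εM)) = a * x := by rw [ha]; field_simp
  set L := logb 2 (1 + ρ * u)
  have hL : 0 < L := logb_pos one_lt_two (by nlinarith)
  have hLa : 1 ≤ RM / L * (a * u) := by
    rw [div_mul_eq_mul_div, one_le_div hL, hau, mul_div_assoc']
    rwa [div_mul_eq_mul_div] at hsnr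
  have hmono := monotoneOn_log_one_add_mul_sub_mul_log_one_add_mul (c := 1 - RM / L) (u := u)
    ha0 hρ0.le hu.le (sub_le_self _ (div_pos hRM hL).le)
    (by nlinarith [mul_le_mul_of_nonneg_right hLa hρ0.le, div_pos hRM hL])
  intro x hx y hy hxy
  have := div_le_div_of_nonneg_right (hmono hx hy hxy) (log_pos one_lt_two).le
  simp only [harg, logb]
  convert this using 1 <;> ring

/-- at high SNR, the rate-difference function
`F_u^{(ρ)}(x) = log₂(1 + ρx(u − ε_M/ρ)/(u(1+ε_M))) − (1 − R_M/log₂(1+ρu))·log₂(1+ρx)`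
is monotonically increasing: for fixed `u ≤ x₁ ≤ x₂` there is `ρ₀ > ε_M/u` with
`F_u^{(ρ)}(x₁) ≤ F_u^{(ρ)}(x₂)` for all `ρ ≥ ρ₀`. -/
theorem noma_rate_difference_monotone_high_snr
    (RM εM : ℝ) (hRM : 0 < RM) (hεM : εM = 2 ^ RM - 1)
    (u x₁ x₂ : ℝ) (hu : 0 < u) (hx₁ : u ≤ x₁) (hx₂ : x₁ ≤ x₂)
    (F : ℝ → ℝ → ℝ)
    (hF : ∀ ρ x, F ρ x =
      Real.logb 2 (1 + ρ * x * (u - εM / ρ) / (u * (1 + εM))) -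
        (1 - RM / Real.logb 2 (1 + ρ * u)) * Real.logb 2 (1 + ρ * x)) :
    ∃ ρ₀ : ℝ, εM / u < ρ₀ ∧ ∀ ρ : ℝ, ρ₀ ≤ ρ → F ρ x₁ ≤ F ρ x₂ := by
  have hεM0 : 0 < εM := by
    rw [hεM, sub_pos]
    exact one_lt_rpow one_lt_two hRM
  have hsnr : ∀ᶠ ρ in atTop, logb 2 (1 + ρ * u) ≤ RM / (1 + εM) * (ρ * u - εM) := by
    have htend : Tendsto (fun ρ ↦ 1 + ρ * u) atTop atTop :=
      tendsto_atTop_add_const_left _ _ (tendsto_id.atTop_mul_const hu)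
    filter_upwards [htend.eventually
      (eventually_logb_le_mul_sub 2 (k := RM / (1 + εM)) (by positivity) (1 + εM))] with ρ hρ
    exact hρ.trans_eq (by ring)
  obtain ⟨ρ₀, hρ₀⟩ := (hsnr.and (eventually_gt_atTop (εM / u))).exists_forall_of_atTop
  refine ⟨ρ₀, (hρ₀ ρ₀ le_rfl).2, fun ρ hρ ↦ ?_⟩
  rw [hF, hF]
  exact rate_difference_monotoneOn hRM hεM0 hu (hρ₀ ρ hρ).2 (hρ₀ ρ hρ).1 hx₁
    (hx₁.trans hx₂) hx₂
end

section
/- Fix R_M > 0, ε_M = 2^{R_M} − 1, and channel gains z₁,…,z_K > 0 with K ≥ 2. For ρ > 0 define the NOMA unicast rates R_{U,k}(ρ) = log₂(1 + ρ z_k · max{0, min_{1≤j≤K} (z_j − ε_M/ρ)/(z_j(1+ε_M))}) and the OMA unicast rates R̄_{U,k}(ρ) = log₂(1+ρ z_k) · (1 − min{1, R_M / log₂(1 + ρ min_{1≤j≤K} z_j)}), and the secrecy rates R_S(ρ) = max{0, R_{U,1}(ρ) − max_{2≤k≤K} R_{U,k}(ρ)} and R̄_S(ρ) = max{0, R̄_{U,1}(ρ)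 − max_{2≤k≤K} R̄_{U,k}(ρ)}. Then there exists ρ₀ > 0 such that for all ρ ≥ ρ₀, R_S(ρ) ≥ R̄_S(ρ): in the high SNR regime, the secrecy unicasting rate achieved by NOMA is always larger than or equal to that of OMA. -/
open Real

set_option maxHeartbeats 1000000 in
/-- at high SNR, the secrecy unicasting rate achieved by NOMA is always
larger than or equal to that of OMA, for any fixed positive channel gains.  User `i`
is the intended unicast receiver and all other users are potential eavesdroppers. -/
theorem noma_secrecy_rate_ge_oma
    (K : ℕ) (hK : 2 ≤ K) (RM : ℝ) (hRM : 0 < RM)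
    (εM : ℝ) (hεM : εM = 2 ^ RM - 1)
    (z : Fin K → ℝ) (hz : ∀ k, 0 < z k)
    (i : Fin K)
    (neU : (Finset.univ : Finset (Fin K)).Nonempty)
    (neE : ((Finset.univ : Finset (Fin K)).erase i).Nonempty)
    (RU RUbar : ℝ → Fin K → ℝ)
    (hRU : ∀ ρ k, RU ρ k = Real.logb 2 (1 + ρ * z k *
      max 0 (Finset.univ.inf' neU (fun j => (z j - εM / ρ) / (z j * (1 + εM))))))
    (hRUbar : ∀ ρ k, RUbar ρ k = Real.logb 2 (1 + ρ * z k) *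
      (1 - min 1 (RM / Real.logb 2 (1 + ρ * Finset.univ.inf' neU z))))
    (RS RSbar : ℝ → ℝ)
    (hRS : ∀ ρ, RS ρ =
      max 0 (RU ρ i - (Finset.univ.erase i).sup' neE (fun k => RU ρ k)))
    (hRSbar : ∀ ρ, RSbar ρ =
      max 0 (RUbar ρ i - (Finset.univ.erase i).sup' neE (fun k => RUbar ρ k))) :
    ∃ ρ₀ : ℝ, 0 < ρ₀ ∧ ∀ ρ : ℝ, ρ₀ ≤ ρ → RSbar ρ ≤ RS ρ := by
  have h2 : (1:ℝ) < 2 := one_lt_two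
  have hεpos : 0 < εM := by
    rw [hεM]
    have : (1:ℝ) < 2 ^ RM := by
      rw [Real.one_lt_rpow_iff_of_pos (by norm_num)]
      exact Or.inl ⟨one_lt_two, hRM⟩
    linarith
  have h2RM : (2:ℝ) ^ RM = 1 + εM := by rw [hεM]; ring
  obtain ⟨k₀, hk₀mem, hk₀⟩ := Finset.exists_mem_eq_sup' neE z
  obtain ⟨j₀, hj₀mem, hj₀⟩ := Finset.exists_mem_eq_inf' neU z
  have hfac_nonneg : ∀ x : ℝ, (0:ℝ) ≤ 1 - min 1 x := fun x => by
    have := min_le_left (1:ℝ) x; linarith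
  rcases le_or_gt (z i) (z k₀) with hab | hab
  · -- easy case: the strongest eavesdropper is at least as strong as user i,
    -- so the OMA secrecy rate is zero.
    refine ⟨1, one_pos, fun ρ hρ => ?_⟩
    have hρpos : (0:ℝ) < ρ := lt_of_lt_of_le one_pos hρ
    rw [hRS, hRSbar]
    have h1 : RUbar ρ i ≤ RUbar ρ k₀ := by
      rw [hRUbar, hRUbar]
      apply mul_le_mul_of_nonneg_right _ (hfac_nonneg _)
      apply Real.logb_le_logb_of_le h2
      · nlinarith only [hz i, hρpos]
      · nlinarith only [hρpos, hab]
    have h2' : RUbar ρ k₀ ≤ (Finset.univ.erase i).sup' neE (fun k => RUbar ρ k) :=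
      Finset.le_sup' _ hk₀mem
    have h3 : RUbar ρ i - (Finset.univ.erase i).sup' neE (fun k => RUbar ρ k) ≤ 0 := by
      linarith
    rw [max_eq_left h3]
    exact le_max_left _ _
  · -- hard case: 0 < z k₀ < z i
    have ha : 0 < z i := hz i
    have hb : 0 < z k₀ := hz k₀
    have hm : 0 < z j₀ := hz j₀
    set a := z i with ha_def
    set b := z k₀ with hb_def
    set m := z j₀ with hm_def
    clear_value a b m
    have hl2 : (0:ℝ) < Real.log 2 := Real.log_pos h2
    have hεM1 : (0:ℝ) < 1 + εM := by linarith
    obtain ⟨c, hc_def⟩ : ∃ x : ℝ, x = εM / m := ⟨_, rfl⟩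
    have hc : 0 < c := by rw [hc_def]; exact div_pos hεpos hm
    have hεcm : εM = c * m := by rw [hc_def]; field_simp
    obtain ⟨g0, hg0_def⟩ : ∃ x : ℝ,
        x = Real.logb 2 (1 + a) - Real.logb 2 (1 + b) := ⟨_, rfl⟩
    have hg0 : 0 < g0 := by
      rw [hg0_def]
      have := Real.logb_lt_logb h2 (by linarith : (0:ℝ) < 1 + b)
        (by linarith : 1 + b < 1 + a)
      linarith
    obtain ⟨C1, hC1_def⟩ : ∃ x : ℝ, x = 2 * (a - b) * (εM + c) / (b * a) := ⟨_, rfl⟩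
    have hC1 : 0 < C1 := by
      rw [hC1_def]
      apply div_pos _ (mul_pos hb ha)
      have : 0 < a - b := by linarith
      positivity
    obtain ⟨B, hB_def⟩ : ∃ x : ℝ,
        x = 2 * C1 * Real.sqrt (1 + m) / (g0 * RM * (Real.log 2) ^ 2) := ⟨_, rfl⟩
    have hBpos : 0 < B := by
      rw [hB_def]
      apply div_pos _ (by positivity)
      have : 0 < Real.sqrt (1 + m) := Real.sqrt_pos.mpr (by linarith)
      positivity
    refine ⟨max (max 2 (2 * c + 1)) (B ^ 2 + 1),
      lt_of_lt_of_le (by norm_num : (0:ℝ) < 2)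
        ((le_max_left _ _).trans (le_max_left _ _)), fun ρ hρ => ?_⟩
    have hρ2 : (2:ℝ) ≤ ρ := le_trans (le_trans (le_max_left _ _) (le_max_left _ _)) hρ
    have hρ2c : 2 * c + 1 ≤ ρ := le_trans (le_trans (le_max_right _ _) (le_max_left _ _)) hρ
    have hρB : B ^ 2 + 1 ≤ ρ := le_trans (le_max_right _ _) hρ
    have hρ1 : (1:ℝ) ≤ ρ := by linarith
    have hρpos : (0:ℝ) < ρ := by linarith
    have hcρ : c < ρ := by linarith
    have hsqrtρ : B ≤ Real.sqrt ρ := by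
      have h1 : Real.sqrt (B ^ 2) ≤ Real.sqrt ρ := Real.sqrt_le_sqrt (by linarith)
      rwa [Real.sqrt_sq hBpos.le] at h1
    obtain ⟨t, ht_def⟩ : ∃ x : ℝ, x = (ρ - c) / (1 + εM) := ⟨_, rfl⟩
    have ht0 : 0 < t := by rw [ht_def]; exact div_pos (by linarith) hεM1
    have htlb : ρ / (2 * (1 + εM)) ≤ t := by
      rw [ht_def, div_le_div_iff₀ (by positivity) hεM1]
      nlinarith only [hρ2c, hεM1, mul_nonneg (by linarith only [hρ2c, hc] : (0:ℝ) ≤ ρ - 2 * c) hεM1.le]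
    have hρt : (ρ - t) * (1 + εM) = ρ * εM + c := by
      rw [ht_def]; field_simp; ring
    have ht2 : ρ ≤ 2 * (1 + εM) * t := by
      have h := htlb
      rw [div_le_iff₀ (by positivity : (0:ℝ) < 2 * (1 + εM))] at h
      linarith only [h]
    -- Step A: value of the NOMA rates
    have hα : Finset.univ.inf' neU (fun j => (z j - εM / ρ) / (z j * (1 + εM)))
        = (m - εM / ρ) / (m * (1 + εM)) := by
      apply le_antisymm
      · rw [hm_def]
        exact Finset.inf'_le _ (Finset.mem_univ j₀)
      · apply Finset.le_inf'
        intro j _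
        have hmz : m ≤ z j := by
          rw [← hj₀]; exact Finset.inf'_le z (Finset.mem_univ j)
        have hzj : 0 < z j := hz j
        have hd : 0 < εM / ρ := div_pos hεpos hρpos
        rw [div_le_div_iff₀ (by positivity) (by positivity)]
        nlinarith only [mul_nonneg (mul_nonneg hd.le (sub_nonneg.mpr hmz)) hεM1.le]
    have hαpos : 0 < (m - εM / ρ) / (m * (1 + εM)) := by
      apply div_pos _ (by positivity)
      rw [sub_pos, div_lt_iff₀ hρpos]
      have h := mul_lt_mul_of_pos_right hcρ hm
      linarith [hεcm]
    have hRUk : ∀ k, RU ρ k = Real.logb 2 (1 + z k * t) := by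
      intro k
      rw [hRU, hα, max_eq_right hαpos.le]
      congr 1
      rw [ht_def, hc_def]
      field_simp
    -- Step B: the strongest NOMA eavesdropper
    have hsupRU : (Finset.univ.erase i).sup' neE (fun k => RU ρ k)
        = Real.logb 2 (1 + b * t) := by
      apply le_antisymm
      · apply Finset.sup'_le
        intro k hk
        rw [hRUk]
        have hzk : z k ≤ b := by
          rw [← hk₀]; exact Finset.le_sup' z hk
        apply Real.logb_le_logb_of_le h2
        · nlinarith only [hz k, ht0]
        · nlinarith only [hzk, ht0, hz k]
      · calc Real.logb 2 (1 + b * t) = RU ρ k₀ := by rw [hRUk, ← hb_def]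
          _ ≤ _ := Finset.le_sup' _ hk₀mem
    -- Step C: the OMA side
    obtain ⟨L, hL_def⟩ : ∃ x : ℝ, x = Real.logb 2 (1 + ρ * m) := ⟨_, rfl⟩
    have hRMlt : RM < L := by
      have h1 : (2:ℝ) ^ RM < 1 + ρ * m := by
        rw [h2RM]
        have h := mul_lt_mul_of_pos_right hcρ hm
        linarith only [h, hεcm]
      have h2' : Real.logb 2 ((2:ℝ) ^ RM) < Real.logb 2 (1 + ρ * m) :=
        Real.logb_lt_logb h2 (Real.rpow_pos_of_pos (by norm_num) RM) h1
      rw [Real.logb_rpow (by norm_num) (by norm_num)] at h2'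
      rw [hL_def]; exact h2'
    have hLpos : 0 < L := hRM.trans hRMlt
    have hmin : min 1 (RM / L) = RM / L :=
      min_eq_right ((div_le_one hLpos).mpr hRMlt.le)
    have hRMLpos : 0 < RM / L := div_pos hRM hLpos
    have hRML1 : RM / L < 1 := (div_lt_one hLpos).mpr hRMlt
    have hRUbark : ∀ k, RUbar ρ k = Real.logb 2 (1 + ρ * z k) * (1 - RM / L) := by
      intro k
      rw [hRUbar, hj₀, ← hL_def, hmin]
    have hsupRUbar : (Finset.univ.erase i).sup' neE (fun k => RUbar ρ k)
        = Real.logb 2 (1 + ρ * b) * (1 - RM / L) := by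
      apply le_antisymm
      · apply Finset.sup'_le
        intro k hk
        rw [hRUbark]
        apply mul_le_mul_of_nonneg_right _ (by linarith)
        have hzk : z k ≤ b := by
          rw [← hk₀]; exact Finset.le_sup' z hk
        apply Real.logb_le_logb_of_le h2
        · nlinarith only [hz k, hρpos]
        · nlinarith only [hzk, hρpos, hz k]
      · calc Real.logb 2 (1 + ρ * b) * (1 - RM / L) = RUbar ρ k₀ := by
              rw [hRUbark, ← hb_def]
          _ ≤ _ := Finset.le_sup' _ hk₀mem
    -- Step D: final comparison
    rw [hRS, hRSbar, hsupRU, hsupRUbar, hRUk i, hRUbark i, ← ha_def]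
    apply max_le_max le_rfl
    obtain ⟨Ga, hGa_def⟩ : ∃ x : ℝ, x = Real.logb 2 (1 + ρ * a) := ⟨_, rfl⟩
    obtain ⟨Gb, hGb_def⟩ : ∃ x : ℝ, x = Real.logb 2 (1 + ρ * b) := ⟨_, rfl⟩
    obtain ⟨Da, hDa_def⟩ : ∃ x : ℝ, x = Real.logb 2 (1 + a * t) := ⟨_, rfl⟩
    obtain ⟨Db, hDb_def⟩ : ∃ x : ℝ, x = Real.logb 2 (1 + b * t) := ⟨_, rfl⟩
    rw [← hGa_def, ← hGb_def, ← hDa_def, ← hDb_def]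
    -- (1) lower bound on the OMA gap
    have hGg0 : g0 ≤ Ga - Gb := by
      have h1 : (1 + a) * (1 + ρ * b) ≤ (1 + ρ * a) * (1 + b) := by
        nlinarith only [mul_nonneg (by linarith only [hρ1] : (0:ℝ) ≤ ρ - 1)
          (by linarith only [hab] : (0:ℝ) ≤ a - b)]
      have h2' : Real.logb 2 ((1 + a) * (1 + ρ * b)) ≤
          Real.logb 2 ((1 + ρ * a) * (1 + b)) :=
        Real.logb_le_logb_of_le h2 (by positivity) h1
      rw [Real.logb_mul (by positivity) (by positivity),
        Real.logb_mul (by positivity) (by positivity)] at h2'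
      rw [hg0_def, hGa_def, hGb_def]; linarith
    -- (2) key bound: the gap difference is small
    obtain ⟨N₁, hN₁_def⟩ : ∃ x : ℝ, x = (1 + ρ * a) * (1 + b * t) := ⟨_, rfl⟩
    obtain ⟨N₂, hN₂_def⟩ : ∃ x : ℝ, x = (1 + ρ * b) * (1 + a * t) := ⟨_, rfl⟩
    have hN₁pos : 0 < N₁ := by rw [hN₁_def]; positivity
    have hN₂pos : 0 < N₂ := by rw [hN₂_def]; positivity
    have hGD : (Ga - Gb) - (Da - Db) = Real.logb 2 N₁ - Real.logb 2 N₂ := by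
      rw [hN₁_def, hN₂_def,
        Real.logb_mul (by positivity : (0:ℝ) < 1 + ρ * a).ne'
          (by positivity : (0:ℝ) < 1 + b * t).ne',
        Real.logb_mul (by positivity : (0:ℝ) < 1 + ρ * b).ne'
          (by positivity : (0:ℝ) < 1 + a * t).ne',
        hGa_def, hGb_def, hDa_def, hDb_def]
      ring
    have hlog : Real.logb 2 N₁ - Real.logb 2 N₂ ≤ (N₁ / N₂ - 1) / Real.log 2 := by
      have h1 : Real.log (N₁ / N₂) ≤ N₁ / N₂ - 1 :=
        Real.log_le_sub_one_of_pos (div_pos hN₁pos hN₂pos)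
      rw [Real.log_div hN₁pos.ne' hN₂pos.ne'] at h1
      rw [← Real.log_div_log, ← Real.log_div_log, div_sub_div_same]
      gcongr
    have hq : N₁ / N₂ - 1 ≤ C1 / ρ := by
      have hdiff : N₁ - N₂ = (a - b) * (ρ - t) := by
        rw [hN₁_def, hN₂_def]; ring
      have hCba : C1 * (b * a) = 2 * (a - b) * (εM + c) := by
        rw [hC1_def]; field_simp
      have hN₂lb : ρ * b * (a * t) ≤ N₂ := by
        rw [hN₂_def]
        nlinarith only [mul_pos hρpos hb, mul_pos ha ht0]
      have f2 : c * 1 ≤ c * ρ := mul_le_mul_of_nonneg_left hρ1 hc.le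
      have f3 : ρ * (εM + c) ≤ 2 * (1 + εM) * t * (εM + c) :=
        mul_le_mul_of_nonneg_right ht2 (by positivity)
      have h5 : ρ - t ≤ 2 * t * (εM + c) := by
        nlinarith only [hρt, f2, f3, hεM1]
      have hp : (a - b) * ρ * (ρ - t) ≤ (a - b) * ρ * (2 * t * (εM + c)) :=
        mul_le_mul_of_nonneg_left h5
          (mul_nonneg (by linarith only [hab] : (0:ℝ) ≤ a - b) hρpos.le)
      have g1 : C1 * (ρ * b * (a * t)) ≤ C1 * N₂ :=
        mul_le_mul_of_nonneg_left hN₂lb hC1.le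
      have g2 : C1 * (ρ * b * (a * t)) = 2 * (a - b) * (εM + c) * (ρ * t) := by
        linear_combination (ρ * t) * hCba
      have hfrac : N₁ / N₂ - 1 = (N₁ - N₂) / N₂ := by field_simp
      rw [hfrac, div_le_div_iff₀ hN₂pos hρpos, hdiff]
      linarith only [g1, g2, hp]
    -- (3) upper bound on L
    have hLub : L ≤ 2 * Real.sqrt (1 + m) * Real.sqrt ρ / Real.log 2 := by
      have h1 : Real.log (1 + ρ * m) ≤ 2 * Real.sqrt (1 + ρ * m) := by
        have hs : Real.log (Real.sqrt (1 + ρ * m)) ≤ Real.sqrt (1 + ρ * m) - 1 :=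
          Real.log_le_sub_one_of_pos (Real.sqrt_pos.mpr (by positivity))
        rw [Real.log_sqrt (by positivity)] at hs
        linarith
      have h2' : Real.sqrt (1 + ρ * m) ≤ Real.sqrt (1 + m) * Real.sqrt ρ := by
        rw [← Real.sqrt_mul (by linarith : (0:ℝ) ≤ 1 + m) ρ]
        apply Real.sqrt_le_sqrt
        nlinarith only [hρ1, hm, mul_nonneg (by linarith only [hρ1] : (0:ℝ) ≤ ρ - 1) hm.le]
      have h3 : Real.log (1 + ρ * m) ≤ 2 * (Real.sqrt (1 + m) * Real.sqrt ρ) := by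
        linarith only [h1, h2']
      rw [hL_def, ← Real.log_div_log, div_le_div_iff₀ hl2 hl2]
      nlinarith only [mul_le_mul_of_nonneg_right h3 hl2.le]
    -- combine: C1 / ρ / log 2 ≤ g0 * RM / L
    have hCρ : C1 / ρ / Real.log 2 ≤ g0 * RM / L := by
      have hBle : 2 * C1 * Real.sqrt (1 + m) = B * (g0 * RM * (Real.log 2) ^ 2) := by
        rw [hB_def]
        field_simp
      have hρsq : ρ = Real.sqrt ρ * Real.sqrt ρ := (Real.mul_self_sqrt hρpos.le).symm
      have hLB : C1 * L ≤ g0 * RM * Real.log 2 * ρ := by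
        calc C1 * L ≤ C1 * (2 * Real.sqrt (1 + m) * Real.sqrt ρ / Real.log 2) :=
              mul_le_mul_of_nonneg_left hLub hC1.le
          _ = (2 * C1 * Real.sqrt (1 + m)) * Real.sqrt ρ / Real.log 2 := by ring
          _ = B * (g0 * RM * (Real.log 2) ^ 2) * Real.sqrt ρ / Real.log 2 := by
              rw [hBle]
          _ = g0 * RM * Real.log 2 * (B * Real.sqrt ρ) := by
              field_simp
          _ ≤ g0 * RM * Real.log 2 * (Real.sqrt ρ * Real.sqrt ρ) := by
              apply mul_le_mul_of_nonneg_left _ (by positivity)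
              exact mul_le_mul_of_nonneg_right hsqrtρ (Real.sqrt_nonneg ρ)
          _ = g0 * RM * Real.log 2 * ρ := by rw [← hρsq]
      rw [div_div, div_le_div_iff₀ (by positivity) hLpos]
      nlinarith only [hLB]
    have hkey : (Ga - Gb) - (Da - Db) ≤ g0 * RM / L := by
      calc (Ga - Gb) - (Da - Db) = Real.logb 2 N₁ - Real.logb 2 N₂ := hGD
        _ ≤ (N₁ / N₂ - 1) / Real.log 2 := hlog
        _ ≤ C1 / ρ / Real.log 2 := by gcongr
        _ ≤ g0 * RM / L := hCρ
    -- final step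
    have h3 : g0 * (RM / L) ≤ (Ga - Gb) * (RM / L) :=
      mul_le_mul_of_nonneg_right hGg0 hRMLpos.le
    have he2 : g0 * RM / L = g0 * (RM / L) := by ring
    rw [he2] at hkey
    nlinarith only [hkey, h3]
end

section
/- Fix R_M > 0 and ε_M = 2^{R_M} − 1, and let w > 0 be the weakest effective channel gain. (i) For every ρ > 0, F_w^{(ρ)}(w) = 0, where F_w^{(ρ)}(x) = log₂(1 + ρ x (w − ε_M/ρ)/(w(1+ε_M))) − (1 − R_M/log₂(1+ρw)) log₂(1+ρx); equivalently, log₂(1 + ρ (w − ε_M/ρ)/(1+ε_M)) = log₂(1+ρw) − R_M. (ii) For every fixed z ≥ w there exists ρ₀ > ε_M/w such that F_w^{(ρ)}(z) ≥ 0 for all ρ ≥ ρ₀; that is, at high SNR the use of NOMA increases every user's capability to decode the unicasting message relative to OMA. -/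
/-!
At the weakest user the NOMA rate is exactly the OMA rate `log₂(1 + ρw) − R_M`. For a
stronger user `z > w`, write both rates in natural logarithms: `F_w^{(ρ)}(z) ≥ 0` amounts to
`log(1 + ρw) · (log(1 + ρz) − log(1 + ρz − c)) ≤ R_M log 2 · (log(1 + ρz) − log(1 + ρw))`
with `c = ε_M (z − w) / w`. As `ρ → ∞` the left side is `O(log ρ / ρ) → 0`, while the right
side tends to `R_M log 2 · log (z / w) > 0`.
-/

open Real Filter Topology

/-- The rate difference `F_w^{(ρ)}(x)` of the paper, with `R = R_M` and `ε = ε_M`. -/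
noncomputable def rateGap (R ε w ρ x : ℝ) : ℝ :=
  logb 2 (1 + ρ * x * (w - ε / ρ) / (w * (1 + ε))) -
    (1 - R / logb 2 (1 + ρ * w)) * logb 2 (1 + ρ * x)

lemma tendsto_log_one_add_mul_sub_log {z : ℝ} (hz : z ≠ 0) :
    Tendsto (fun ρ => log (1 + ρ * z) - log ρ) atTop (𝓝 (log z)) := by
  have hinv : Tendsto (fun ρ : ℝ => ρ⁻¹ + z) atTop (𝓝 z) := by
    simpa using tendsto_inv_atTop_zero.add_const z
  refine (hinv.log hz).congr' ?_
  filter_upwards [hinv.eventually_ne hz, eventually_gt_atTop 0] with ρ hne hρ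
  rw [eq_sub_iff_add_eq', ← log_mul hρ.ne' hne, mul_add, mul_inv_cancel₀ hρ.ne']

lemma tendsto_log_one_add_mul_sub_log_one_add_mul {w z : ℝ} (hw : w ≠ 0) (hz : z ≠ 0) :
    Tendsto (fun ρ => log (1 + ρ * z) - log (1 + ρ * w)) atTop (𝓝 (log z - log w)) :=
  ((tendsto_log_one_add_mul_sub_log hz).sub (tendsto_log_one_add_mul_sub_log hw)).congr
    fun ρ => by ring

lemma tendsto_log_mul_log_sub_log_sub {c : ℝ} (hc : 0 ≤ c) :
    Tendsto (fun y => log y * (log y - log (y - c))) atTop (𝓝 0) := by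
  have hbound : Tendsto (fun y => c * (log y ^ 1 / (1 * y + -c))) atTop (𝓝 0) := by
    simpa using (tendsto_pow_log_div_mul_add_atTop 1 (-c) 1 one_ne_zero).const_mul c
  refine tendsto_of_tendsto_of_tendsto_of_le_of_le' tendsto_const_nhds hbound ?_ ?_
  all_goals filter_upwards [eventually_gt_atTop (c + 1)] with y hy
  all_goals have hyc : 0 < y - c := by linarith
  · exact mul_nonneg (log_nonneg (by linarith)) (sub_nonneg.2 (log_le_log hyc (by linarith)))
  · have hdiff : log y - log (y - c) ≤ c / (y - c) := by
      have := log_le_sub_one_of_pos (div_pos (by linarith : 0 < y) hyc)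
      rwa [log_div (by linarith) hyc.ne', div_sub_one hyc.ne', sub_sub_cancel] at this
    calc log y * (log y - log (y - c)) ≤ log y * (c / (y - c)) :=
          mul_le_mul_of_nonneg_left hdiff (log_nonneg (by linarith))
      _ = c * (log y ^ 1 / (1 * y + -c)) := by ring

lemma logb_one_add_mul_div {R ε w ρ : ℝ} (hε : 1 + ε = 2 ^ R) (hρ : ρ ≠ 0)
    (hρw : 1 + ρ * w ≠ 0) :
    logb 2 (1 + ρ * ((w - ε / ρ) / (1 + ε))) = logb 2 (1 + ρ * w) - R := by
  have hε₀ : 1 + ε ≠ 0 := by rw [hε]; positivity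
  have hsplit : 1 + ρ * ((w - ε / ρ) / (1 + ε)) = (1 + ρ * w) / (1 + ε) := by
    field_simp
    ring
  rw [hsplit, logb_div hρw hε₀, hε, logb_rpow two_pos (by norm_num)]

lemma rateGap_self {R ε w ρ : ℝ} (hε : 1 + ε = 2 ^ R) (hρ : 0 < ρ) (hw : 0 < w) :
    rateGap R ε w ρ w = 0 := by
  have hρw : 0 < ρ * w := mul_pos hρ hw
  have hLw : logb 2 (1 + ρ * w) ≠ 0 := (logb_pos one_lt_two (by linarith)).ne'
  have harg : 1 + ρ * w * (w - ε / ρ) / (w * (1 + ε)) = 1 + ρ * ((w - ε / ρ) / (1 + ε)) := by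
    field_simp
  rw [rateGap, harg, logb_one_add_mul_div hε hρ.ne' (by linarith)]
  field_simp
  ring

lemma rateGap_eq {R ε w ρ x : ℝ} (hε : 1 + ε = 2 ^ R) (hρ : ρ ≠ 0) (hw : w ≠ 0)
    (hm : 1 + ρ * x - ε * (x - w) / w ≠ 0) (hLw : log (1 + ρ * w) ≠ 0) :
    rateGap R ε w ρ x =
      (R * log 2 * (log (1 + ρ * x) - log (1 + ρ * w)) -
        log (1 + ρ * w) * (log (1 + ρ * x) - log (1 + ρ * x - ε * (x - w) / w))) /
          (log 2 * log (1 + ρ * w)) := by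
  have hε₀ : 1 + ε ≠ 0 := by rw [hε]; positivity
  have harg : 1 + ρ * x * (w - ε / ρ) / (w * (1 + ε)) =
      (1 + ρ * x - ε * (x - w) / w) / (1 + ε) := by
    field_simp
    ring
  have hlog2 : log 2 ≠ 0 := (log_pos one_lt_two).ne'
  rw [rateGap, harg, logb_div hm hε₀, hε, logb_rpow two_pos (by norm_num)]
  simp only [logb]
  field_simp
  ring

lemma eventually_rateGap_nonneg {R ε w z : ℝ} (hR : 0 < R) (hε : 1 + ε = 2 ^ R) (hw : 0 < w)
    (hwz : w ≤ z) : ∀ᶠ ρ in atTop, 0 ≤ rateGap R ε w ρ z := by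
  rcases hwz.eq_or_lt with rfl | hwz
  · filter_upwards [eventually_gt_atTop 0] with ρ hρ
    exact (rateGap_self hε hρ hw).ge
  have hz : 0 < z := hw.trans hwz
  set c := ε * (z - w) / w
  have hc : 0 ≤ c := by
    have : 1 < (2 : ℝ) ^ R := one_lt_rpow one_lt_two hR
    exact div_nonneg (mul_nonneg (by linarith) (by linarith)) hw.le
  have hy : Tendsto (fun ρ : ℝ => 1 + ρ * z) atTop atTop :=
    tendsto_atTop_add_const_left _ _ (tendsto_id.atTop_mul_const hz)
  have hsmall := (tendsto_log_mul_log_sub_log_sub hc).comp hy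
  have hlarge := ((tendsto_log_one_add_mul_sub_log_one_add_mul hw.ne' hz.ne').const_mul
    (R * log 2))
  have hlim : (0 : ℝ) < R * log 2 * (log z - log w) :=
    mul_pos (mul_pos hR (log_pos one_lt_two)) (sub_pos.2 (log_lt_log hw hwz))
  filter_upwards [hsmall.eventually_lt hlarge hlim, eventually_gt_atTop (c / z),
    eventually_gt_atTop 0] with ρ hlt hρc hρ
  simp only [Function.comp_apply] at hlt
  have hρz : c < ρ * z := (div_lt_iff₀ hz).1 hρc
  have hρw : 0 < ρ * w := mul_pos hρ hw
  have hLw : 0 < log (1 + ρ * w) := log_pos (by linarith)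
  have hLwz : log (1 + ρ * w) ≤ log (1 + ρ * z) :=
    log_le_log (by linarith) (by nlinarith)
  have hloss : 0 ≤ log (1 + ρ * z) - log (1 + ρ * z - c) :=
    sub_nonneg.2 (log_le_log (by linarith) (by linarith))
  rw [rateGap_eq hε hρ.ne' hw.ne' (by linarith) hLw.ne']
  refine div_nonneg ?_ (mul_pos (log_pos one_lt_two) hLw).le
  nlinarith [mul_le_mul_of_nonneg_right hLwz hloss]

/-- (i) the rate-difference function vanishes at the weakest user,
`F_w^{(ρ)}(w) = 0` for every `ρ > 0` (equivalently
`log₂(1 + ρ(w − ε_M/ρ)/(1+ε_M)) = log₂(1+ρw) − R_M`); (ii) at high SNR,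
`F_w^{(ρ)}(z) ≥ 0` for every fixed `z ≥ w`: NOMA increases every user's capability
to decode the unicast message relative to OMA. -/
theorem noma_rate_difference_nonneg
    (RM εM : ℝ) (hRM : 0 < RM) (hεM : εM = 2 ^ RM - 1)
    (w : ℝ) (hw : 0 < w)
    (F : ℝ → ℝ → ℝ)
    (hF : ∀ ρ x, F ρ x =
      Real.logb 2 (1 + ρ * x * (w - εM / ρ) / (w * (1 + εM))) -
        (1 - RM / Real.logb 2 (1 + ρ * w)) * Real.logb 2 (1 + ρ * x)) :
    (∀ ρ : ℝ, 0 < ρ → F ρ w = 0 ∧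
      Real.logb 2 (1 + ρ * ((w - εM / ρ) / (1 + εM))) =
        Real.logb 2 (1 + ρ * w) - RM) ∧
    (∀ z : ℝ, w ≤ z → ∃ ρ₀ : ℝ, εM / w < ρ₀ ∧ ∀ ρ : ℝ, ρ₀ ≤ ρ → 0 ≤ F ρ z) := by
  have hε : 1 + εM = 2 ^ RM := by rw [hεM]; ring
  obtain rfl : F = rateGap RM εM w := funext₂ hF
  refine ⟨fun ρ hρ => ⟨rateGap_self hε hρ hw,
    logb_one_add_mul_div hε hρ.ne' (add_pos one_pos (mul_pos hρ hw)).ne'⟩, fun z hz => ?_⟩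
  obtain ⟨ρ₀, hρ₀⟩ := eventually_atTop.1 (eventually_rateGap_nonneg hRM hε hw hz)
  exact ⟨max ρ₀ (εM / w + 1), by simp, fun ρ hρ => hρ₀ ρ (le_of_max_le_left hρ)⟩
end

section
/- Fix ρ > 0, R_M > 0, ε_M = 2^{R_M} − 1, and channel gains z₁,…,z_K > 0 with K ≥ 2. Suppose ε_M/ρ < z₁ and z₁ ≤ z_k for all 2 ≤ k ≤ K (user 1 has the weakest gain but multicasting is feasible). Then the NOMA and OMA unicast rates of user 1 coincide: log₂(1 + ρ z₁ · min_{1≤j≤K} (z_j − ε_M/ρ)/(z_j(1+ε_M))) = log₂(1+ρz₁) · (1 − R_M/log₂(1+ρz₁)). In particular, on the event z₁ ≤ min_{k≥2} z_k, NOMA offers no unicast rate gain over OMA. -/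
open Real

/-- if user 1 (index `i`) has the weakest channel gain but multicasting is
feasible (`ε_M/ρ < z_i ≤ z_k` for all `k`), then the NOMA and OMA unicast rates of user 1
coincide: NOMA offers no unicast rate gain over OMA on this event. -/
theorem noma_no_gain_when_user1_weakest
    (K : ℕ) (hK : 2 ≤ K) (ρ RM : ℝ) (hρ : 0 < ρ) (hRM : 0 < RM)
    (εM : ℝ) (hεM : εM = 2 ^ RM - 1)
    (z : Fin K → ℝ) (hz : ∀ k, 0 < z k)
    (i : Fin K) (hfeas : εM / ρ < z i) (hweak : ∀ k, z i ≤ z k)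
    (neU : (Finset.univ : Finset (Fin K)).Nonempty) :
    Real.logb 2 (1 + ρ * z i *
        Finset.univ.inf' neU (fun j => (z j - εM / ρ) / (z j * (1 + εM)))) =
      Real.logb 2 (1 + ρ * z i) * (1 - RM / Real.logb 2 (1 + ρ * z i)) := by
  have h2 : (1:ℝ) < 2 ^ RM := by
    have := Real.one_lt_rpow_iff_of_pos (x := 2) (by norm_num) (y := RM)
    exact this.mpr (Or.inl ⟨by norm_num, hRM⟩)
  have hεpos : 0 < εM := by rw [hεM]; linarith
  have ha : 0 < 1 + εM := by linarith
  have hcpos : 0 < εM / ρ := div_pos hεpos hρ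
  have hinf : Finset.univ.inf' neU (fun j => (z j - εM / ρ) / (z j * (1 + εM)))
      = (z i - εM / ρ) / (z i * (1 + εM)) := by
    apply le_antisymm
    · exact Finset.inf'_le _ (Finset.mem_univ i)
    · apply Finset.le_inf'
      intro j _
      rw [div_le_div_iff₀ (mul_pos (hz i) ha) (mul_pos (hz j) ha)]
      have hij := hweak j
      nlinarith [mul_nonneg (mul_nonneg ha.le hcpos.le) (sub_nonneg.mpr hij)]
  rw [hinf]
  have hzne : z i ≠ 0 := (hz i).ne'
  have harg : 1 + ρ * z i * ((z i - εM / ρ) / (z i * (1 + εM)))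
      = (1 + ρ * z i) / (2 ^ RM) := by
    have h2εM : (2:ℝ) ^ RM = 1 + εM := by rw [hεM]; ring
    rw [h2εM]
    field_simp
    ring
  rw [harg]
  have hLpos : 0 < Real.logb 2 (1 + ρ * z i) := by
    apply Real.logb_pos (by norm_num)
    nlinarith [hz i]
  rw [Real.logb_div (by nlinarith [hz i]) (by positivity),
    Real.logb_rpow (by norm_num : (0:ℝ) < 2)]
  have : Real.logb 2 (1 + ρ * z i) * (RM / Real.logb 2 (1 + ρ * z i)) = RM := by
    field_simp
  rw [mul_sub, mul_one, this]
  all_goals norm_num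
end

section
/- Let M ≥ 1 and K ≥ 2 be integers, and let z ~ Gamma(M,1) and u ~ Exp(K−1) be independent. For every t > 0, P( z > t and z < u ) = Γ(M, Kt) / ( (M−1)! · K^M ), and this probability tends to K^{−M} as t → 0⁺. In particular, the probability of the event { z > ε_M/ρ, z < u } — on which the NOMA unicast rate does not exceed the OMA unicast rate — is bounded away from 0 as ρ → ∞ and approaches K^{−M}. -/
/-!
Conditioning on `z`, the event has probability `∫_{z > t} P(u > z) dGamma(M,1)(z)` with
`P(u > z) = e^{-(K-1)z}`. Multiplying the `Gamma(a, l)` density by `e^{-rz}` gives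
`(l/(l+r))^a` times the `Gamma(a, l+r)` density, so the probability is
`K^{-M} · P(Gamma(M,K) > t)`. The substitution `s = Kz` turns this tail into `Γ(M,Kt)/(M-1)!`,
and right-continuity of the distribution function of `Gamma(M,K)`, which has no mass on
`(-∞, 0]`, gives the limit `K^{-M}`.
-/

open Real MeasureTheory ProbabilityTheory Filter Set Topology

lemma expMeasure_real_Ioi {r x : ℝ} (hr : 0 < r) (hx : 0 ≤ x) :
    (expMeasure r).real (Ioi x) = exp (-(r * x)) := by
  have := isProbabilityMeasure_expMeasure hr
  rw [← compl_Iic, probReal_compl_eq_one_sub measurableSet_Iic, ← cdf_eq_real,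
    cdf_expMeasure_eq hr, if_pos hx, sub_sub_cancel]

lemma expMeasure_Ioi {r x : ℝ} (hr : 0 < r) (hx : 0 ≤ x) :
    expMeasure r (Ioi x) = ENNReal.ofReal (exp (-(r * x))) := by
  have := isProbabilityMeasure_expMeasure hr
  rw [← expMeasure_real_Ioi hr hx, ofReal_measureReal]

lemma prod_setOf_lt_fst_lt_snd (μ ν : Measure ℝ) [SFinite ν] (t : ℝ) :
    μ.prod ν {p | t < p.1 ∧ p.1 < p.2} = ∫⁻ x in Ioi t, ν (Ioi x) ∂μ := by
  have hS : MeasurableSet {p : ℝ × ℝ | t < p.1 ∧ p.1 < p.2} :=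
    (measurable_fst measurableSet_Ioi).inter (measurableSet_lt measurable_fst measurable_snd)
  rw [Measure.prod_apply hS, ← lintegral_indicator measurableSet_Ioi]
  congr with x
  by_cases hx : t < x <;> simp [indicator, hx, preimage, Ioi]

lemma gammaPDFReal_mul_exp {a l r : ℝ} (hl : 0 ≤ l) (hlr : 0 < l + r) (x : ℝ) :
    gammaPDFReal a l x * exp (-(r * x)) = (l / (l + r)) ^ a * gammaPDFReal a (l + r) x := by
  by_cases hx : 0 ≤ x
  · simp only [gammaPDFReal, if_pos hx]
    have hexp : exp (-(l * x)) * exp (-(r * x)) = exp (-((l + r) * x)) := by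
      rw [← exp_add]; ring_nf
    have hpow : (l + r) ^ a ≠ 0 := (rpow_pos_of_pos hlr a).ne'
    rw [div_rpow hl hlr.le, ← hexp]
    field_simp
  · simp [gammaPDFReal, hx]

lemma measurable_gammaPDF (a r : ℝ) : Measurable (gammaPDF a r) :=
  (measurable_gammaPDFReal a r).ennreal_ofReal

lemma setLIntegral_expMeasure_Ioi_gammaMeasure {a l r : ℝ} (ha : 0 < a) (hl : 0 < l) (hr : 0 < r)
    (t : ℝ) :
    ∫⁻ x in Ioi t, expMeasure r (Ioi x) ∂gammaMeasure a l =
      ENNReal.ofReal ((l / (l + r)) ^ a) * gammaMeasure a (l + r) (Ioi t) := by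
  have hlr : 0 < l + r := by linarith
  have hdensity : gammaPDF a l * (fun x => expMeasure r (Ioi x)) =
      fun x => ENNReal.ofReal ((l / (l + r)) ^ a) * gammaPDF a (l + r) x := by
    ext x
    rcases lt_or_ge x 0 with hx | hx
    · simp [gammaPDF_of_neg hx]
    · rw [Pi.mul_apply, expMeasure_Ioi hr hx, gammaPDF, gammaPDF, ← ENNReal.ofReal_mul
        (gammaPDFReal_nonneg ha hl x), ← ENNReal.ofReal_mul (by positivity),
        gammaPDFReal_mul_exp hl.le hlr]
  have htail : Measurable fun x => expMeasure r (Ioi x) :=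
    Antitone.measurable fun x y hxy => measure_mono (Ioi_subset_Ioi hxy)
  rw [gammaMeasure, setLIntegral_withDensity_eq_setLIntegral_mul _
    (measurable_gammaPDF a l) htail measurableSet_Ioi, hdensity,
    lintegral_const_mul _ (measurable_gammaPDF _ _), gammaMeasure,
    withDensity_apply _ measurableSet_Ioi]

lemma gammaMeasure_prod_expMeasure_setOf_lt {a l r : ℝ} (ha : 0 < a) (hl : 0 < l) (hr : 0 < r)
    (t : ℝ) :
    (gammaMeasure a l).prod (expMeasure r) {p | t < p.1 ∧ p.1 < p.2} =
      ENNReal.ofReal ((l / (l + r)) ^ a) * gammaMeasure a (l + r) (Ioi t) := by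
  have := isProbabilityMeasure_expMeasure hr
  rw [prod_setOf_lt_fst_lt_snd, setLIntegral_expMeasure_Ioi_gammaMeasure ha hl hr]

lemma tendsto_measureReal_Ioi_nhdsGT (μ : Measure ℝ) [IsProbabilityMeasure μ] (x : ℝ) :
    Tendsto (fun t => μ.real (Ioi t)) (𝓝[>] x) (𝓝 (μ.real (Ioi x))) := by
  have hcdf (t : ℝ) : μ.real (Ioi t) = 1 - cdf μ t := by
    rw [← compl_Iic, probReal_compl_eq_one_sub measurableSet_Iic, cdf_eq_real]
  simp_rw [hcdf]
  exact tendsto_const_nhds.sub (((cdf μ).right_continuous x).mono Ioi_subset_Ici_self)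

lemma gammaMeasure_real_Ioi_zero {a r : ℝ} (ha : 0 < a) (hr : 0 < r) :
    (gammaMeasure a r).real (Ioi 0) = 1 := by
  have := isProbabilityMeasure_gammaMeasure ha hr
  rw [← compl_Iic, probReal_compl_eq_one_sub measurableSet_Iic, ← cdf_eq_real,
    cdf_gammaMeasure_eq_lintegral ha hr, ← setLIntegral_congr Iio_ae_eq_Iic,
    lintegral_gammaPDF_of_nonpos le_rfl]
  simp

lemma tendsto_gammaMeasure_real_Ioi {a r : ℝ} (ha : 0 < a) (hr : 0 < r) :
    Tendsto (fun t => (gammaMeasure a r).real (Ioi t)) (𝓝[>] 0) (𝓝 1) := by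
  have := isProbabilityMeasure_gammaMeasure ha hr
  simpa only [gammaMeasure_real_Ioi_zero ha hr] using
    tendsto_measureReal_Ioi_nhdsGT (gammaMeasure a r) 0

noncomputable def upperIncompleteGamma (a t : ℝ) : ℝ := ∫ s in Ioi t, s ^ (a - 1) * exp (-s)

lemma upperIncompleteGamma_natCast_add_one (n : ℕ) (t : ℝ) :
    upperIncompleteGamma (n + 1) t = ∫ s in Ioi t, s ^ n * exp (-s) := by
  simp only [upperIncompleteGamma, add_sub_cancel_right, rpow_natCast]

lemma gammaPDFReal_eq_mul_comp_mul_left {a r x : ℝ} (hr : 0 < r) (hx : 0 ≤ x) :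
    gammaPDFReal a r x = r / Gamma a * ((r * x) ^ (a - 1) * exp (-(r * x))) := by
  rw [gammaPDFReal, if_pos hx, mul_rpow hr.le hx, rpow_sub_one hr.ne']
  field_simp

lemma gammaMeasure_real_Ioi {a r t : ℝ} (ha : 0 < a) (hr : 0 < r) (ht : 0 ≤ t) :
    (gammaMeasure a r).real (Ioi t) = upperIncompleteGamma a (r * t) / Gamma a := by
  rw [measureReal_def, gammaMeasure, withDensity_apply _ measurableSet_Ioi]
  simp only [gammaPDF]
  rw [← integral_eq_lintegral_of_nonneg_ae (ae_of_all _ (gammaPDFReal_nonneg ha hr))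
      (measurable_gammaPDFReal a r).aestronglyMeasurable,
    setIntegral_congr_fun measurableSet_Ioi fun x (hx : t < x) =>
      gammaPDFReal_eq_mul_comp_mul_left hr (ht.trans hx.le),
    integral_const_mul, integral_comp_mul_left_Ioi (fun s => s ^ (a - 1) * exp (-s)) t hr,
    smul_eq_mul, upperIncompleteGamma]
  field_simp

/-- for independent `z ~ Gamma(M,1)` and `u ~ Exp(K−1)`,
`P(z > t ∧ z < u) = Γ(M,Kt)/((M−1)!·K^M)` for every `t > 0`, and this probability
tends to `K^{−M}` as `t → 0⁺`; in particular the probability of the event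
`{z > ε_M/ρ, z < u}` — on which NOMA offers no unicast gain over OMA — approaches
`K^{−M}` as the SNR grows. -/
theorem prob_unicast_user_weaker_than_all
    (M K : ℕ) (hM : 1 ≤ M) (hK : 2 ≤ K)
    (μ : Measure (ℝ × ℝ))
    (hμ : μ = (gammaMeasure M 1).prod (expMeasure ((K : ℝ) - 1)))
    (Γup : ℝ → ℝ)
    (hΓ : ∀ t, Γup t = ∫ s in Set.Ioi t, s ^ (M - 1) * Real.exp (-s)) :
    (∀ t : ℝ, 0 < t →
      (μ {p : ℝ × ℝ | t < p.1 ∧ p.1 < p.2}).toReal =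
        Γup (K * t) / ((M - 1).factorial * (K : ℝ) ^ M)) ∧
    Tendsto (fun t : ℝ => (μ {p : ℝ × ℝ | t < p.1 ∧ p.1 < p.2}).toReal)
      (nhdsWithin 0 (Set.Ioi 0)) (nhds (((K : ℝ) ^ M)⁻¹)) := by
  obtain ⟨n, rfl⟩ := Nat.exists_eq_add_of_le' hM
  have hK₁ : (1 : ℝ) < K := by exact_mod_cast hK
  have hprob (t : ℝ) : (μ {p : ℝ × ℝ | t < p.1 ∧ p.1 < p.2}).toReal =
      ((K : ℝ) ^ (n + 1))⁻¹ * (gammaMeasure (n + 1) K).real (Ioi t) := by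
    rw [hμ, gammaMeasure_prod_expMeasure_setOf_lt (by positivity) one_pos (by linarith),
      add_sub_cancel, ENNReal.toReal_mul, ENNReal.toReal_ofReal (by positivity), one_div,
      inv_rpow (by positivity), rpow_natCast, measureReal_def]
    push_cast
    rfl
  refine ⟨fun t ht => ?_, ?_⟩
  · rw [hprob, gammaMeasure_real_Ioi (by positivity) (by positivity) ht.le, hΓ,
      upperIncompleteGamma_natCast_add_one, Gamma_nat_eq_factorial, Nat.add_sub_cancel]
    field_simp
  · simpa [hprob] using (tendsto_gammaMeasure_real_Ioi (a := n + 1) (by positivity)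
      (by positivity : (0 : ℝ) < K)).const_mul ((K : ℝ) ^ (n + 1))⁻¹
end

section
/- Let M ≥ 1 and K ≥ 2 be integers, and let z ~ Gamma(M,1) and u ~ Exp(K−1) be independent. For every t > 0, P( z > u and u > t ) = ( Γ(M, t) · e^{−(K−1)t} − K^{−M} · Γ(M, Kt) ) / (M−1)!. Equivalently, the quantity Q₅ = P(z < u) + P(z > u, u < t) appearing in the secrecy outage probability equals 1 − Γ(M,t)e^{−(K−1)t}/(M−1)! + K^{−M}Γ(M,Kt)/(M−1)!. -/
open Real MeasureTheory ProbabilityTheory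

open Set

/-!
Write `z` for the first and `u` for the second coordinate. Given `z > t`, the exponential
variable lands in `(t, z)` with probability `e^{-(K-1)t} - e^{-(K-1)z}`; integrating this
against the `Gamma(M, 1)` density gives `e^{-(K-1)t} Γ(M, t) - ∫_t^∞ z^{M-1} e^{-Kz} dz`, and
the substitution `z ↦ Kz` turns the last integral into `K^{-M} Γ(M, Kt)`. For the second
identity, the events `z < u`, `u < min z t` and `t < u < z` cover the plane up to the diagonal
and the line `u = t`, which are null because the exponential law has no atoms.
-/

lemma measureReal_prod_apply {α β : Type*} [MeasurableSpace α] [MeasurableSpace β]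
    (μ : Measure α) (ν : Measure β) [IsFiniteMeasure ν] {s : Set (α × β)}
    (hs : MeasurableSet s) :
    (μ.prod ν).real s = ∫ x, ν.real (Prod.mk x ⁻¹' s) ∂μ := by
  rw [measureReal_def, Measure.prod_apply hs, ← integral_toReal
    (measurable_measure_prodMk_left hs).aemeasurable (ae_of_all _ fun _ ↦ measure_lt_top _ _)]
  rfl

lemma measure_prod_graph_eq_zero {α β : Type*} [MeasurableSpace α] [MeasurableSpace β]
    [MeasurableEq β] (μ : Measure α) (ν : Measure β) [SFinite ν] [NullSingletonClass ν]
    {f : α → β} (hf : Measurable f) : (μ.prod ν) {p | p.2 = f p.1} = 0 := by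
  have hs : MeasurableSet {p : α × β | p.2 = f p.1} :=
    measurableSet_eq_fun measurable_snd (hf.comp measurable_fst)
  simp [Measure.prod_apply hs]

lemma measureReal_prod_lt_add_lt_add_lt (μ ν : Measure ℝ) [IsProbabilityMeasure μ]
    [IsProbabilityMeasure ν] [NullSingletonClass ν] (t : ℝ) :
    (μ.prod ν).real {p | p.1 < p.2} + (μ.prod ν).real {p | p.2 < p.1 ∧ p.2 < t} +
      (μ.prod ν).real {p | p.2 < p.1 ∧ t < p.2} = 1 := by
  set A := {p : ℝ × ℝ | p.1 < p.2}
  set B := {p : ℝ × ℝ | p.2 < p.1 ∧ p.2 < t}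
  set C := {p : ℝ × ℝ | p.2 < p.1 ∧ t < p.2}
  have hB : MeasurableSet B := (measurableSet_lt measurable_snd measurable_fst).inter
    (measurableSet_lt measurable_snd measurable_const)
  have hC : MeasurableSet C := (measurableSet_lt measurable_snd measurable_fst).inter
    (measurableSet_lt measurable_const measurable_snd)
  have hAB : Disjoint A B := disjoint_left.2 fun p hA hB ↦ hA.not_gt hB.1
  have hABC : Disjoint (A ∪ B) C := disjoint_left.2 fun p hAB hC ↦ by
    rcases hAB with hA | hB
    exacts [hA.not_gt hC.1, hB.2.not_gt hC.2]
  have hcover : (A ∪ B ∪ C)ᶜ ⊆ {p | p.2 = id p.1} ∪ {p | p.2 = (fun _ ↦ t) p.1} := by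
    intro p hp
    simp only [A, B, C, mem_compl_iff, mem_union, mem_ofPred_eq, id] at hp ⊢
    grind
  have hnull : (μ.prod ν) (A ∪ B ∪ C)ᶜ = 0 :=
    measure_mono_null hcover <| measure_union_null
      (measure_prod_graph_eq_zero μ ν measurable_id)
      (measure_prod_graph_eq_zero μ ν measurable_const)
  rw [← measureReal_union hAB hB, ← measureReal_union hABC hC,
    measureReal_congr (ae_eq_univ.2 hnull), probReal_univ]

instance nullSingletonClass_gammaMeasure (a r : ℝ) : NullSingletonClass (gammaMeasure a r) := by
  unfold gammaMeasure; infer_instance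

instance nullSingletonClass_expMeasure (r : ℝ) : NullSingletonClass (expMeasure r) :=
  nullSingletonClass_gammaMeasure 1 r

lemma expMeasure_real_Ioo {r t z : ℝ} (hr : 0 < r) (ht : 0 ≤ t) (htz : t ≤ z) :
    (expMeasure r).real (Ioo t z) = exp (-(r * t)) - exp (-(r * z)) := by
  have := isProbabilityMeasure_expMeasure hr
  rw [measureReal_congr Ioo_ae_eq_Ioc, measureReal_def, ← measure_cdf (expMeasure r),
    StieltjesFunction.measure_Ioc, ENNReal.toReal_ofReal, cdf_expMeasure_eq hr,
    cdf_expMeasure_eq hr, if_pos ht, if_pos (ht.trans htz)]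
  · ring
  · exact sub_nonneg.2 (monotone_cdf _ htz)

lemma expMeasure_real_Ioo_eq_indicator {r t : ℝ} (hr : 0 < r) (ht : 0 ≤ t) (z : ℝ) :
    (expMeasure r).real (Ioo t z) =
      (Ioi t).indicator (fun z ↦ exp (-(r * t)) - exp (-(r * z))) z := by
  rcases le_or_gt z t with hzt | htz
  · rw [Ioo_eq_empty (not_lt.2 hzt), measureReal_empty, indicator_of_notMem (notMem_Ioi.2 hzt)]
  · rw [indicator_of_mem (mem_Ioi.2 htz), expMeasure_real_Ioo hr ht htz.le]

lemma gammaPDFReal_natCast {M : ℕ} (hM : 1 ≤ M) (r : ℝ) {x : ℝ} (hx : 0 ≤ x) :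
    gammaPDFReal M r x = r ^ M * x ^ (M - 1) * exp (-(r * x)) / (M - 1).factorial := by
  obtain ⟨n, rfl⟩ := Nat.exists_eq_add_of_le' hM
  rw [gammaPDFReal, if_pos hx, Nat.add_sub_cancel, Nat.cast_add_one, Gamma_nat_eq_factorial,
    add_sub_cancel_right, rpow_natCast, ← Nat.cast_add_one, rpow_natCast]
  ring

lemma integral_gammaMeasure {a r : ℝ} (ha : 0 < a) (hr : 0 < r) (g : ℝ → ℝ) :
    ∫ x, g x ∂gammaMeasure a r = ∫ x, gammaPDFReal a r x * g x := by
  have hf : Measurable (gammaPDF a r) := (measurable_gammaPDFReal a r).ennreal_ofReal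
  rw [gammaMeasure, integral_withDensity_eq_integral_toReal_smul hf
    (ae_of_all _ fun _ ↦ ENNReal.ofReal_lt_top)]
  simp only [gammaPDF, ENNReal.toReal_ofReal (gammaPDFReal_nonneg ha hr _), smul_eq_mul]

lemma integrableOn_pow_mul_exp_neg_mul_Ioi (n : ℕ) {c t : ℝ} (hc : 0 < c) (ht : 0 ≤ t) :
    IntegrableOn (fun x ↦ x ^ n * exp (-(c * x))) (Ioi t) := by
  have h := integrableOn_rpow_mul_exp_neg_mul_rpow (p := 1) (s := n) (b := c)
    (neg_one_lt_zero.trans_le n.cast_nonneg) one_pos hc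
  simp only [rpow_one, rpow_natCast, neg_mul] at h
  exact h.mono_set (Ioi_subset_Ioi ht)

lemma setIntegral_Ioi_pow_mul_exp_neg_mul (n : ℕ) {c : ℝ} (hc : 0 < c) (t : ℝ) :
    ∫ x in Ioi t, x ^ n * exp (-(c * x)) =
      (c ^ (n + 1))⁻¹ * ∫ x in Ioi (c * t), x ^ n * exp (-x) := by
  have h := integral_comp_mul_left_Ioi (fun x ↦ x ^ n * exp (-x)) t hc
  simp only [mul_pow, mul_assoc, integral_const_mul, smul_eq_mul] at h
  rw [pow_succ, mul_inv, mul_assoc, ← h, inv_mul_cancel_left₀ (pow_ne_zero n hc.ne')]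

lemma measureReal_gammaMeasure_prod_expMeasure_between {M : ℕ} (hM : 1 ≤ M) {r t : ℝ}
    (hr : 0 < r) (ht : 0 ≤ t) :
    ((gammaMeasure M 1).prod (expMeasure r)).real {p | p.2 < p.1 ∧ t < p.2} =
      (exp (-(r * t)) * (∫ z in Ioi t, z ^ (M - 1) * exp (-z)) -
        ∫ z in Ioi t, z ^ (M - 1) * exp (-((r + 1) * z))) / (M - 1).factorial := by
  have := isProbabilityMeasure_expMeasure hr
  have hslice (z : ℝ) : Prod.mk z ⁻¹' {p : ℝ × ℝ | p.2 < p.1 ∧ t < p.2} = Ioo t z := by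
    ext u
    exact and_comm
  have hdensity : ∀ z ∈ Ioi t, gammaPDFReal M 1 z * (exp (-(r * t)) - exp (-(r * z))) =
      (exp (-(r * t)) * (z ^ (M - 1) * exp (-z)) - z ^ (M - 1) * exp (-((r + 1) * z))) /
        (M - 1).factorial := by
    intro z hz
    rw [gammaPDFReal_natCast hM 1 (ht.trans (le_of_lt hz)), add_mul, neg_add, exp_add]
    ring_nf
  have hint₁ : IntegrableOn (fun z ↦ z ^ (M - 1) * exp (-z)) (Ioi t) := by
    simpa using integrableOn_pow_mul_exp_neg_mul_Ioi (M - 1) one_pos ht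
  have hint₂ := integrableOn_pow_mul_exp_neg_mul_Ioi (M - 1) (by linarith : 0 < r + 1) ht
  have hmeas : MeasurableSet {p : ℝ × ℝ | p.2 < p.1 ∧ t < p.2} :=
    (measurableSet_lt measurable_snd measurable_fst).inter
      (measurableSet_lt measurable_const measurable_snd)
  rw [measureReal_prod_apply _ _ hmeas]
  simp_rw [hslice, expMeasure_real_Ioo_eq_indicator hr ht]
  rw [integral_gammaMeasure (by exact_mod_cast hM) one_pos]
  simp_rw [← indicator_mul_right]
  rw [integral_indicator measurableSet_Ioi, setIntegral_congr_fun measurableSet_Ioi hdensity,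
    integral_div, integral_sub (hint₁.const_mul _) hint₂, integral_const_mul]

/-- for independent `z ~ Gamma(M,1)` and `u ~ Exp(K−1)` and `t > 0`,
`P(z > u ∧ u > t) = (Γ(M,t)·e^{−(K−1)t} − K^{−M}·Γ(M,Kt))/(M−1)!`; equivalently the
term `Q₅ = P(z < u) + P(z > u ∧ u < t)` of the secrecy outage probability equals
`1 − Γ(M,t)e^{−(K−1)t}/(M−1)! + K^{−M}Γ(M,Kt)/(M−1)!`. -/
theorem secrecy_outage_Q5
    (M K : ℕ) (hM : 1 ≤ M) (hK : 2 ≤ K)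
    (μ : Measure (ℝ × ℝ))
    (hμ : μ = (gammaMeasure M 1).prod (expMeasure ((K : ℝ) - 1)))
    (Γup : ℝ → ℝ)
    (hΓ : ∀ s, Γup s = ∫ r in Set.Ioi s, r ^ (M - 1) * Real.exp (-r)) :
    ∀ t : ℝ, 0 < t →
      ((μ {p : ℝ × ℝ | p.2 < p.1 ∧ t < p.2}).toReal =
        (Γup t * Real.exp (-((K : ℝ) - 1) * t) - ((K : ℝ) ^ M)⁻¹ * Γup (K * t)) /
          (M - 1).factorial) ∧
      ((μ {p : ℝ × ℝ | p.1 < p.2}).toReal +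
          (μ {p : ℝ × ℝ | p.2 < p.1 ∧ p.2 < t}).toReal =
        1 - Γup t * Real.exp (-((K : ℝ) - 1) * t) / (M - 1).factorial +
          ((K : ℝ) ^ M)⁻¹ * Γup (K * t) / (M - 1).factorial) := by
  intro t ht
  have hrate : (0 : ℝ) < K - 1 := by
    have : (2 : ℝ) ≤ K := by exact_mod_cast hK
    linarith
  have := isProbabilityMeasure_gammaMeasure (a := M) (by exact_mod_cast hM) one_pos
  have := isProbabilityMeasure_expMeasure hrate
  have hbetween := measureReal_gammaMeasure_prod_expMeasure_between hM hrate ht.le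
  rw [sub_add_cancel, setIntegral_Ioi_pow_mul_exp_neg_mul _ (by linarith) t,
    Nat.sub_add_cancel hM, ← hΓ, ← hΓ, ← neg_mul] at hbetween
  have hsum :=
    measureReal_prod_lt_add_lt_add_lt (gammaMeasure M 1) (expMeasure ((K : ℝ) - 1)) t
  subst hμ
  simp only [← measureReal_def]
  constructor
  · rw [hbetween]; ring
  · rw [hbetween] at hsum
    linear_combination hsum
end
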